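/- arXiv:2009.00469 — 4 statements merged into one kernel-verified Lean document; each statement's English description precedes it below -/
import Mathlib

section
/- Let U be a machine that makes the plain information distance D_U minimal up to additive constants (i.e., for every machine V there is a constant c with D_U(x,y) ≤ D_V(x,y) + c for all x,y). Then there is a constant c such that for all binary strings x and y, |D_U(x,y) − max(K(x|y), K(y|x))| ≤ c, where K denotes plain conditional complexity. -/
open scoped ENNReal

/-- Binary strings: finite sequences over `{0,1}`. -/
abbrev BStr : Type := List Bool

/-- The type of two-argument partial functions on binary strings. -/
abbrev PFun2 : Type := BStr → BStr →. BStr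

/-- A machine is a partial computable function of two binary-string arguments. -/
def IsMachine (U : PFun2) : Prop := Partrec₂ U

/-- Conditional complexity `K_U(y|x) = min{|p| : U(p,x) = y}` (∞ if no program). -/
noncomputable def Kcond (U : PFun2) (y x : BStr) : ℕ∞ :=
  sInf {n : ℕ∞ | ∃ p : BStr, (p.length : ℕ∞) = n ∧ y ∈ U p x}

/-- Information distance `D_U(x,y) = min{|p| : U(p,x) = y ∧ U(p,y) = x}` (∞ if no program). -/
noncomputable def IDist (U : PFun2) (x y : BStr) : ℕ∞ :=
  sInf {n : ℕ∞ | ∃ p : BStr, (p.length : ℕ∞) = n ∧ y ∈ U p x ∧ x ∈ U p y}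

/-- `U` is an optimal machine for plain conditional complexity. -/
def OptimalPlainK (U : PFun2) : Prop :=
  IsMachine U ∧ ∀ V : PFun2, IsMachine V → ∃ c : ℕ, ∀ x y : BStr,
    Kcond U y x ≤ Kcond V y x + (c : ℕ∞)

/-!
The lower bound holds for any machine `U`: a program witnessing `D_U(x,y)` also witnesses
`K_U(x|y)` and `K_U(y|x)`, and `W` is optimal for `K`.

For the upper bound, consider for each `m` the graph whose edges are the pairs `(x, y)` with
`K(x|y) ≤ m` and `K(y|x) ≤ m`. At most `2 ^ (m + 1)` strings are described from a given `v` by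
programs of length `≤ m`, so every vertex lies on at most `2 ^ (m + 2)` edges, and the greedy
colouring of a computable enumeration of the edges uses fewer than `2 ^ (m + 3)` colours. Reading
a program of length `m + 3` as a colour, a machine maps `x` to the other endpoint of the edge at
`x` with that colour; as the colouring is proper, one program of length
`max (K(x|y), K(y|x)) + 3` sends `x` to `y` and `y` to `x`. Minimality of `D_U` does the rest.
-/

namespace PlainInformationDistance

open Nat.Partrec (Code)
open Nat.Partrec.Code Encodable

def ofBits : List Bool → ℕ
  | [] => 0
  | b :: l => b.toNat + 2 * ofBits l

def toBits : ℕ → ℕ → List Bool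
  | 0, _ => []
  | k + 1, c => c.bodd :: toBits k c.div2

@[simp] theorem length_toBits (k c : ℕ) : (toBits k c).length = k := by
  induction k generalizing c <;> simp [toBits, *]

theorem ofBits_toBits {k c : ℕ} (h : c < 2 ^ k) : ofBits (toBits k c) = c := by
  induction k generalizing c with
  | zero => simp_all [toBits, ofBits]
  | succ k ih =>
    rw [toBits, ofBits, ih (by rw [Nat.div2_val]; omega), Nat.bodd_add_div2]

theorem primrec_ofBits : Primrec ofBits :=
  (Primrec.list_foldr Primrec.id (Primrec.const 0) <| Primrec.to₂ <| Primrec.nat_add.comp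
    (Primrec.dom_bool Bool.toNat |>.comp (Primrec.fst.comp Primrec.snd))
    (Primrec.nat_mul.comp (Primrec.const 2) (Primrec.snd.comp Primrec.snd))).of_eq
    fun l => by induction l <;> simp_all [ofBits]

theorem encard_setOf_length_eq (k : ℕ) : {l : List Bool | l.length = k}.encard = 2 ^ k := by
  rw [Set.encard, ← Nat.cast_ofNat, ← Nat.cast_pow]
  change ENat.card (List.Vector Bool k) = _
  simp [ENat.card_eq_coe_fintype_card, card_vector]

theorem encard_setOf_length_le_le_two_pow (m : ℕ) :
    {l : List Bool | l.length ≤ m}.encard ≤ 2 ^ (m + 1) := by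
  have hunion : {l : List Bool | l.length ≤ m} =
      ⋃ k ∈ Finset.range (m + 1), {l : List Bool | l.length = k} := by
    ext l; simp
  calc _ ≤ ∑ k ∈ Finset.range (m + 1), {l : List Bool | l.length = k}.encard :=
        hunion ▸ Finset.set_encard_biUnion_le _ _
    _ = ((∑ k ∈ Finset.range (m + 1), 2 ^ k : ℕ) : ℕ∞) := by
        simp [encard_setOf_length_eq]
    _ ≤ 2 ^ (m + 1) := by
        exact_mod_cast (Nat.geomSum_lt le_rfl fun k hk => Finset.mem_range.1 hk).le

theorem encard_setOf_exists_mem_le {α β : Type*} (f : α → Part β) (s : Set α) :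
    {b | ∃ a ∈ s, b ∈ f a}.encard ≤ s.encard := by
  cases isEmpty_or_nonempty α
  · simp
  choose! g hgs hg using fun (b : β) (hb : ∃ a ∈ s, b ∈ f a) => hb
  exact Set.encard_le_encard_of_injOn (fun b hb => hgs b hb)
    fun b hb b' hb' h => Part.mem_unique (hg b hb) (h ▸ hg b' hb')

theorem Kcond_le_coe_iff {U : PFun2} {y x : BStr} {m : ℕ} :
    Kcond U y x ≤ m ↔ ∃ p : BStr, p.length ≤ m ∧ y ∈ U p x := by
  constructor
  · intro h
    have hne : {n : ℕ∞ | ∃ p : BStr, (p.length : ℕ∞) = n ∧ y ∈ U p x}.Nonempty := by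
      by_contra hempty
      rw [Set.not_nonempty_iff_eq_empty] at hempty
      simp [Kcond, hempty] at h
    obtain ⟨p, hp, hpy⟩ := csInf_mem hne
    exact ⟨p, by rw [Kcond, ← hp] at h; exact_mod_cast h, hpy⟩
  · rintro ⟨p, hp, hpy⟩
    exact (sInf_le ⟨p, rfl, hpy⟩ : Kcond U y x ≤ p.length).trans (by exact_mod_cast hp)

theorem encard_setOf_Kcond_le_le_two_pow (U : PFun2) (x : BStr) (m : ℕ) :
    {y | Kcond U y x ≤ m}.encard ≤ 2 ^ (m + 1) := by
  simp_rw [Kcond_le_coe_iff]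
  exact (encard_setOf_exists_mem_le (fun p => U p x) {p | p.length ≤ m}).trans
    (encard_setOf_length_le_le_two_pow m)

theorem max_Kcond_le_IDist (U : PFun2) (x y : BStr) :
    max (Kcond U x y) (Kcond U y x) ≤ IDist U x y :=
  max_le (sInf_le_sInf fun _ ⟨p, hp, _, hx⟩ => ⟨p, hp, hx⟩)
    (sInf_le_sInf fun _ ⟨p, hp, hy, _⟩ => ⟨p, hp, hy⟩)

def mex (l : List ℕ) : ℕ := (List.range (l.length + 1)).findIdx fun c => c ∉ l

theorem mex_not_mem_and_le_length (l : List ℕ) : mex l ∉ l ∧ mex l ≤ l.length := by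
  have hfree : ∃ c ∈ List.range (l.length + 1), decide (c ∉ l) = true := by
    by_contra! hall
    have hsub : List.range (l.length + 1) ⊆ l := fun c hc => by simpa using hall c hc
    simpa using (List.nodup_range.subperm hsub).length_le
  have hlt := List.findIdx_lt_length_of_exists hfree
  have hmex := List.findIdx_getElem (w := hlt)
  rw [List.getElem_range] at hmex
  rw [List.length_range] at hlt
  exact ⟨by simpa [mex] using hmex, Nat.lt_succ_iff.1 hlt⟩

section GreedyColoring

variable {α : Type*} [DecidableEq α]

abbrev SharesEndpoint (e f : α × α) : Prop := e.1 = f.1 ∨ e.1 = f.2 ∨ e.2 = f.1 ∨ e.2 = f.2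

def incidentEdges (G : Set (α × α)) (v : α) : Set (α × α) := {e ∈ G | e.1 = v ∨ e.2 = v}

def usedColors (L : List ((α × α) × ℕ)) (e : α × α) : List ℕ :=
  (L.filter fun a => SharesEndpoint a.1 e).map Prod.snd

def addEdge (L : List ((α × α) × ℕ)) (e : α × α) : List ((α × α) × ℕ) :=
  if e ∈ L.map Prod.fst then L else L ++ [(e, mex (usedColors L e))]

def greedyColoring (enum : ℕ → Option (α × α)) : ℕ → List ((α × α) × ℕ)
  | 0 => []
  | n + 1 => (enum n).elim (greedyColoring enum n) (addEdge (greedyColoring enum n))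

def IsProperColoring (L : List ((α × α) × ℕ)) : Prop :=
  ∀ a ∈ L, ∀ b ∈ L, a ≠ b → SharesEndpoint a.1 b.1 → a.2 ≠ b.2

theorem prefix_addEdge (L : List ((α × α) × ℕ)) (e : α × α) : L <+: addEdge L e := by
  unfold addEdge; split_ifs
  · exact List.prefix_refl L
  · exact List.prefix_append L _

theorem mem_map_fst_addEdge (L : List ((α × α) × ℕ)) (e : α × α) :
    e ∈ (addEdge L e).map Prod.fst := by
  unfold addEdge; split_ifs with h
  · exact h
  · simp

theorem nodup_map_fst_addEdge {L : List ((α × α) × ℕ)} (hL : (L.map Prod.fst).Nodup)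
    (e : α × α) : ((addEdge L e).map Prod.fst).Nodup := by
  unfold addEdge; split_ifs with h
  · exact hL
  · rw [List.map_append, List.map_singleton, List.nodup_append]
    exact ⟨hL, List.nodup_singleton _, fun a ha b hb => by
      rw [List.mem_singleton] at hb; exact fun hab => h (by simpa [hab, hb] using ha)⟩

theorem isProperColoring_addEdge {L : List ((α × α) × ℕ)} (hL : IsProperColoring L)
    (e : α × α) : IsProperColoring (addEdge L e) := by
  unfold addEdge; split_ifs with he
  · exact hL
  have hfresh : ∀ a ∈ L, SharesEndpoint a.1 e → a.2 ≠ mex (usedColors L e) :=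
    fun a ha hae hc => (mex_not_mem_and_le_length _).1 <| hc ▸
      List.mem_map_of_mem (f := Prod.snd) (List.mem_filter.2 ⟨ha, decide_eq_true hae⟩)
  have hsymm : ∀ e f : α × α, SharesEndpoint e f → SharesEndpoint f e := by
    intro e f; tauto
  intro a ha b hb hab hshare
  simp only [List.mem_append, List.mem_singleton] at ha hb
  rcases ha with ha | rfl <;> rcases hb with hb | rfl
  · exact hL a ha b hb hab hshare
  · exact hfresh a ha hshare
  · exact (hfresh b hb (hsymm _ _ hshare)).symm
  · exact absurd rfl hab

theorem _root_.List.Nodup.length_le_encard {l : List α} (hl : l.Nodup) {s : Set α}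
    (h : ∀ x ∈ l, x ∈ s) : (l.length : ℕ∞) ≤ s.encard := by
  rw [← List.toFinset_card_of_nodup hl, ← Set.encard_coe_eq_coe_finsetCard]
  exact Set.encard_le_encard fun x hx => h x (List.mem_toFinset.1 hx)

theorem mex_usedColors_lt {G : Set (α × α)} {d : ℕ}
    (hd : ∀ v, (incidentEdges G v).encard ≤ d)
    {L : List ((α × α) × ℕ)} (hL : (L.map Prod.fst).Nodup) (hLG : ∀ a ∈ L, a.1 ∈ G)
    {e : α × α} (heG : e ∈ G)
    (he : e ∉ L.map Prod.fst) : mex (usedColors L e) < 2 * d := by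
  set F := (L.filter fun a => SharesEndpoint a.1 e).map Prod.fst
  have hFL : F.Sublist (L.map Prod.fst) := List.filter_sublist.map _
  have hnodup : (e :: F).Nodup :=
    List.nodup_cons.2 ⟨fun h => he (hFL.subset h), hL.sublist hFL⟩
  have hsub : ∀ f ∈ e :: F, f ∈ incidentEdges G e.1 ∪ incidentEdges G e.2 := by
    intro f hf
    rcases List.mem_cons.1 hf with rfl | hf
    · exact Or.inl ⟨heG, Or.inl rfl⟩
    obtain ⟨a, ha, rfl⟩ := List.mem_map.1 hf
    obtain ⟨haL, hae⟩ := List.mem_filter.1 ha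
    have haG := hLG a haL
    simp only [decide_eq_true_eq] at hae
    simp only [incidentEdges, Set.mem_union, Set.mem_ofPred_eq]
    tauto
  have hlen : ((e :: F).length : ℕ∞) ≤ 2 * d :=
    (hnodup.length_le_encard hsub).trans <| (Set.encard_union_le _ _).trans <| by
      rw [two_mul]; exact add_le_add (hd _) (hd _)
  have hused : (usedColors L e).length = F.length := by simp [usedColors, F]
  have := (mex_not_mem_and_le_length (usedColors L e)).2
  simp only [List.length_cons] at hlen
  norm_cast at hlen
  omega

def colorNeighbor (L : List ((α × α) × ℕ)) (c : ℕ) (v : α) : Option α :=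
  (L.find? fun a => a.2 = c ∧ (a.1.1 = v ∨ a.1.2 = v)).map
    fun a => if a.1.1 = v then a.1.2 else a.1.1

theorem colorNeighbor_of_prefix {L L' : List ((α × α) × ℕ)} (h : L <+: L')
    {c : ℕ} {v z : α} (hz : colorNeighbor L c v = some z) : colorNeighbor L' c v = some z := by
  obtain ⟨t, rfl⟩ := h
  obtain ⟨a, ha, rfl⟩ := Option.map_eq_some_iff.1 hz
  rw [colorNeighbor, List.find?_append, ha, Option.some_or, Option.map_some]

theorem find?_eq_of_isProperColoring {L : List ((α × α) × ℕ)} (hL : IsProperColoring L)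
    {e : α × α} {c : ℕ} (he : (e, c) ∈ L) {v : α} (hv : e.1 = v ∨ e.2 = v) :
    L.find? (fun a => a.2 = c ∧ (a.1.1 = v ∨ a.1.2 = v)) = some (e, c) := by
  cases hfind : L.find? (fun a => a.2 = c ∧ (a.1.1 = v ∨ a.1.2 = v)) with
  | none => simpa [hv] using List.find?_eq_none.1 hfind _ he
  | some b =>
    have hb := List.find?_some hfind
    simp only [decide_eq_true_eq] at hb
    by_contra hne
    refine hL b (List.mem_of_find?_eq_some hfind) _ he (fun h => hne (congrArg some h)) ?_ hb.1
    rcases hb.2 with h | h <;> rcases hv with h' | h' <;> simp [SharesEndpoint, h, h']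

theorem colorNeighbor_eq_of_isProperColoring {L : List ((α × α) × ℕ)}
    (hL : IsProperColoring L) {x y : α} {c : ℕ} (h : ((x, y), c) ∈ L) :
    colorNeighbor L c x = some y ∧ colorNeighbor L c y = some x := by
  simp only [colorNeighbor, find?_eq_of_isProperColoring hL h (Or.inl rfl),
    find?_eq_of_isProperColoring hL h (Or.inr rfl)]
  constructor
  · simp
  · by_cases hxy : x = y <;> simp [hxy]

variable (enum : ℕ → Option (α × α))

theorem greedyColoring_succ (n : ℕ) :
    greedyColoring enum (n + 1) =
      (enum n).elim (greedyColoring enum n) (addEdge (greedyColoring enum n)) := rfl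

theorem greedyColoring_prefix_succ (n : ℕ) :
    greedyColoring enum n <+: greedyColoring enum (n + 1) := by
  cases h : enum n <;> simp [greedyColoring_succ, h, prefix_addEdge]

theorem greedyColoring_prefix {m n : ℕ} (h : m ≤ n) :
    greedyColoring enum m <+: greedyColoring enum n := by
  induction n, h using Nat.le_induction with
  | base => exact List.prefix_refl _
  | succ n _ ih => exact ih.trans (greedyColoring_prefix_succ enum n)

theorem nodup_map_fst_greedyColoring (n : ℕ) :
    ((greedyColoring enum n).map Prod.fst).Nodup := by
  induction n with
  | zero => exact List.nodup_nil
  | succ n ih => cases h : enum n <;> simp [greedyColoring_succ, h, ih, nodup_map_fst_addEdge]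

theorem isProperColoring_greedyColoring (n : ℕ) :
    IsProperColoring (greedyColoring enum n) := by
  induction n with
  | zero => simp [IsProperColoring, greedyColoring]
  | succ n ih =>
    cases h : enum n <;> simp [greedyColoring_succ, h, ih, isProperColoring_addEdge]

theorem exists_mem_greedyColoring_succ {n : ℕ} {e : α × α} (h : enum n = some e) :
    ∃ c, (e, c) ∈ greedyColoring enum (n + 1) := by
  simpa [greedyColoring_succ, h] using mem_map_fst_addEdge (greedyColoring enum n) e

theorem fst_mem_of_mem_greedyColoring {G : Set (α × α)}
    (hG : ∀ n e, enum n = some e → e ∈ G) {n : ℕ} {a : (α × α) × ℕ}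
    (ha : a ∈ greedyColoring enum n) : a.1 ∈ G := by
  induction n with
  | zero => simp [greedyColoring] at ha
  | succ n ih =>
    cases h : enum n with
    | none => simp_all [greedyColoring_succ]
    | some e =>
      simp only [greedyColoring_succ, h, Option.elim_some, addEdge] at ha
      split_ifs at ha
      · exact ih ha
      · rcases List.mem_append.1 ha with ha | ha
        · exact ih ha
        · rw [List.mem_singleton.1 ha]; exact hG n e h

theorem snd_lt_of_mem_greedyColoring {G : Set (α × α)} {d : ℕ}
    (hG : ∀ n e, enum n = some e → e ∈ G) (hd : ∀ v, (incidentEdges G v).encard ≤ d)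
    {n : ℕ} {a : (α × α) × ℕ} (ha : a ∈ greedyColoring enum n) : a.2 < 2 * d := by
  induction n with
  | zero => simp [greedyColoring] at ha
  | succ n ih =>
    cases h : enum n with
    | none => simp_all [greedyColoring_succ]
    | some e =>
      simp only [greedyColoring_succ, h, Option.elim_some, addEdge] at ha
      split_ifs at ha with he
      · exact ih ha
      · rcases List.mem_append.1 ha with ha | ha
        · exact ih ha
        · rw [List.mem_singleton.1 ha]
          exact mex_usedColors_lt hd (nodup_map_fst_greedyColoring enum n)
            (fun b hb => fst_mem_of_mem_greedyColoring enum hG hb) (hG n e h) he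

end GreedyColoring

section Primrec

open Primrec

variable {α : Type*} [Primcodable α]

theorem primrecRel_mem : PrimrecRel fun (a : α) (l : List α) => a ∈ l :=
  (PrimrecRel.exists_mem_list Primrec.eq).swap.of_eq fun a l => by simp

variable [DecidableEq α]

theorem primrec_mex : Primrec mex :=
  list_findIdx (list_range.comp (succ.comp list_length))
    (primrecRel_mem.comp snd fst).not.decide

theorem primrec_usedColors : Primrec₂ (usedColors (α := α)) := by
  have hshare : PrimrecRel fun (a : (α × α) × ℕ) (e : α × α) => SharesEndpoint a.1 e := by
    have hend : ∀ (i : α × α → α) (j : α × α → α), Primrec i → Primrec j →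
        PrimrecRel fun (a : (α × α) × ℕ) (e : α × α) => i a.1 = j e :=
      fun i j hi hj => Primrec.eq.comp (hi.comp (fst.comp fst)) (hj.comp snd)
    exact (hend _ _ fst fst).or <| (hend _ _ fst snd).or <|
      (hend _ _ snd fst).or (hend _ _ snd snd)
  exact to₂ <| list_map (hshare.listFilter.comp fst snd) (snd.comp snd).to₂

theorem primrec_addEdge : Primrec₂ (addEdge (α := α)) :=
  to₂ <| Primrec.ite (primrecRel_mem.comp snd (list_map fst (fst.comp snd).to₂)) fst <|
    list_concat.comp fst (snd.pair (primrec_mex.comp primrec_usedColors))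

theorem primrec_greedyColoring {β : Type*} [Primcodable β]
    {enum : β → ℕ → Option (α × α)} (h : Primrec₂ enum) :
    Primrec₂ fun b => greedyColoring (enum b) := by
  have hstep : Primrec₂ fun (b : β) (p : ℕ × List ((α × α) × ℕ)) =>
      (enum b p.1).elim p.2 (addEdge p.2) :=
    (to₂ <| option_casesOn (h.comp fst (fst.comp snd)) (snd.comp snd)
      (primrec_addEdge.comp (snd.comp (snd.comp fst)) snd).to₂).of_eq
      fun b p => by cases enum b p.1 <;> rfl
  refine (nat_rec (const []) hstep).of_eq fun b n => ?_
  induction n with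
  | zero => rfl
  | succ n ih => simp only [greedyColoring_succ, ← ih]

theorem primrec_colorNeighbor :
    Primrec fun w : List ((α × α) × ℕ) × ℕ × α => colorNeighbor w.1 w.2.1 w.2.2 := by
  have hp : PrimrecRel fun (a : (α × α) × ℕ) (w : ℕ × α) =>
      a.2 = w.1 ∧ (a.1.1 = w.2 ∨ a.1.2 = w.2) :=
    (Primrec.eq.comp (snd.comp fst) (fst.comp snd)).and <|
      (Primrec.eq.comp (fst.comp (fst.comp fst)) (snd.comp snd)).or
        (Primrec.eq.comp (snd.comp (fst.comp fst)) (snd.comp snd))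
  have hother :
      Primrec₂ fun (w : List ((α × α) × ℕ) × ℕ × α) (a : (α × α) × ℕ) =>
        if a.1.1 = w.2.2 then a.1.2 else a.1.1 :=
    to₂ <| Primrec.ite (Primrec.eq.comp (fst.comp (fst.comp snd)) (snd.comp (snd.comp fst)))
      (snd.comp (fst.comp snd)) (fst.comp (fst.comp snd))
  refine (option_map (list_head?.comp (hp.listFilter.comp fst snd)) hother).of_eq fun w => ?_
  simp [colorNeighbor, List.head?_filter]

end Primrec

def closeGraph (U : PFun2) (m : ℕ) : Set (BStr × BStr) :=
  {e | Kcond U e.1 e.2 ≤ m ∧ Kcond U e.2 e.1 ≤ m}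

theorem encard_incidentEdges_closeGraph_le (U : PFun2) (m : ℕ) (v : BStr) :
    (incidentEdges (closeGraph U m) v).encard ≤ (2 ^ (m + 2) : ℕ) := by
  set N := {z | Kcond U z v ≤ m}
  have hsub : incidentEdges (closeGraph U m) v ⊆ (v, ·) '' N ∪ (·, v) '' N := by
    rintro ⟨a, b⟩ ⟨⟨hab, hba⟩, rfl | rfl⟩
    · exact Or.inl ⟨b, hba, rfl⟩
    · exact Or.inr ⟨a, hab, rfl⟩
  calc _ ≤ ((v, ·) '' N ∪ (·, v) '' N).encard := Set.encard_le_encard hsub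
    _ ≤ N.encard + N.encard := (Set.encard_union_le _ _).trans <|
        add_le_add (Set.encard_image_le _ _) (Set.encard_image_le _ _)
    _ ≤ 2 ^ (m + 1) + 2 ^ (m + 1) :=
        add_le_add (encard_setOf_Kcond_le_le_two_pow U v m) (encard_setOf_Kcond_le_le_two_pow U v m)
    _ = (2 ^ (m + 2) : ℕ) := by push_cast; ring

def IsCodeOf (c : Code) (U : PFun2) : Prop :=
  ∀ p x y, y ∈ U p x ↔ encode y ∈ eval c (encode (p, x))

theorem exists_isCodeOf {U : PFun2} (hU : IsMachine U) : ∃ c, IsCodeOf c U := by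
  obtain ⟨c, hc⟩ := Nat.Partrec.Code.exists_code.1 hU
  refine ⟨c, fun p x y => ?_⟩
  simp [hc, encodek]

/-- `w = (x, y, p, q, t)`: within `t` steps, `p` computes `x` from `y` and `q` computes `y`
from `x`. -/
def IsCloseWitness (c : Code) (m : ℕ) (w : BStr × BStr × BStr × BStr × ℕ) : Prop :=
  w.2.2.1.length ≤ m ∧ w.2.2.2.1.length ≤ m ∧
    evaln w.2.2.2.2 c (encode (w.2.2.1, w.2.1)) = some (encode w.1) ∧
    evaln w.2.2.2.2 c (encode (w.2.2.2.1, w.1)) = some (encode w.2.1)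

instance (c : Code) (m : ℕ) : DecidablePred (IsCloseWitness c m) :=
  fun _ => inferInstanceAs (Decidable (_ ∧ _))

def enumCloseGraph (c : Code) (m n : ℕ) : Option (BStr × BStr) :=
  ((decode n).bind (Option.guard fun w => decide (IsCloseWitness c m w))).map
    fun w => (w.1, w.2.1)

theorem mem_closeGraph_of_enumCloseGraph {c : Code} {U : PFun2} (hc : IsCodeOf c U) {m n : ℕ}
    {e : BStr × BStr} (h : enumCloseGraph c m n = some e) : e ∈ closeGraph U m := by
  simp only [enumCloseGraph, Option.map_eq_some_iff, Option.bind_eq_some_iff,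
    Option.guard_eq_some_iff, decide_eq_true_eq] at h
  obtain ⟨w, ⟨_, -, rfl, hw⟩, rfl⟩ := h
  obtain ⟨hp, hq, hx, hy⟩ := hw
  exact ⟨Kcond_le_coe_iff.2 ⟨_, hp, (hc _ _ _).2 (evaln_sound hx)⟩,
    Kcond_le_coe_iff.2 ⟨_, hq, (hc _ _ _).2 (evaln_sound hy)⟩⟩

theorem exists_enumCloseGraph_eq {c : Code} {U : PFun2} (hc : IsCodeOf c U) {m : ℕ}
    {e : BStr × BStr} (he : e ∈ closeGraph U m) : ∃ n, enumCloseGraph c m n = some e := by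
  obtain ⟨x, y⟩ := e
  obtain ⟨p, hp, hx⟩ := Kcond_le_coe_iff.1 he.1
  obtain ⟨q, hq, hy⟩ := Kcond_le_coe_iff.1 he.2
  obtain ⟨t₁, ht₁⟩ := evaln_complete.1 ((hc _ _ _).1 hx)
  obtain ⟨t₂, ht₂⟩ := evaln_complete.1 ((hc _ _ _).1 hy)
  have hw : IsCloseWitness c m (x, y, p, q, max t₁ t₂) :=
    ⟨hp, hq, evaln_mono (le_max_left _ _) ht₁, evaln_mono (le_max_right _ _) ht₂⟩
  exact ⟨encode (x, y, p, q, max t₁ t₂), by simp [enumCloseGraph, encodek, hw]⟩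

open Primrec in
theorem primrec_enumCloseGraph (c : Code) : Primrec₂ (enumCloseGraph c) := by
  have hwitness : PrimrecRel (IsCloseWitness c) := by
    have hx : Primrec fun z : ℕ × BStr × BStr × BStr × BStr × ℕ => z.2.1 := fst.comp snd
    have hy : Primrec fun z : ℕ × BStr × BStr × BStr × BStr × ℕ => z.2.2.1 :=
      fst.comp (snd.comp snd)
    have hp : Primrec fun z : ℕ × BStr × BStr × BStr × BStr × ℕ => z.2.2.2.1 :=
      fst.comp (snd.comp (snd.comp snd))
    have hq : Primrec fun z : ℕ × BStr × BStr × BStr × BStr × ℕ => z.2.2.2.2.1 :=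
      fst.comp (snd.comp (snd.comp (snd.comp snd)))
    have ht : Primrec fun z : ℕ × BStr × BStr × BStr × BStr × ℕ => z.2.2.2.2.2 :=
      snd.comp (snd.comp (snd.comp (snd.comp snd)))
    have hrun : ∀ {f g h : ℕ × BStr × BStr × BStr × BStr × ℕ → BStr},
        Primrec f → Primrec g → Primrec h → PrimrecPred fun z =>
          evaln z.2.2.2.2.2 c (encode (f z, g z)) = some (encode (h z)) := fun hf hg hh =>
      Primrec.eq.comp
        (primrec_evaln.comp ((ht.pair (const c)).pair (Primrec.encode.comp (hf.pair hg))))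
        (option_some.comp (Primrec.encode.comp hh))
    exact (nat_le.comp (list_length.comp hp) fst).and <|
      (nat_le.comp (list_length.comp hq) fst).and <| (hrun hp hy hx).and (hrun hq hx hy)
  have hguard : PrimrecRel fun (a : (ℕ × ℕ) × BStr × BStr × BStr × BStr × ℕ) w =>
      IsCloseWitness c a.1.1 w :=
    PrimrecRel.comp hwitness (fst.comp (fst.comp fst)) snd
  exact to₂ <| option_map (option_bind (Primrec.decode.comp snd) (option_guard hguard snd).to₂)
    ((fst.comp snd).pair (fst.comp (snd.comp snd))).to₂

def distMachine (c : Code) : PFun2 := fun p x =>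
  Nat.rfindOpt fun n =>
    colorNeighbor (greedyColoring (enumCloseGraph c (p.length - 3)) n) (ofBits p) x

open Primrec in
theorem isMachine_distMachine (c : Code) : IsMachine (distMachine c) := by
  have hlevel : Primrec fun w : (BStr × BStr) × ℕ => w.1.1.length - 3 :=
    nat_sub.comp (list_length.comp (fst.comp fst)) (const 3)
  have hcol : Primrec fun w : (BStr × BStr) × ℕ =>
      greedyColoring (enumCloseGraph c (w.1.1.length - 3)) w.2 :=
    (primrec_greedyColoring (primrec_enumCloseGraph c)).comp hlevel snd
  have hcolor : Primrec fun w : (BStr × BStr) × ℕ => ofBits w.1.1 :=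
    primrec_ofBits.comp (fst.comp fst)
  exact Partrec.rfindOpt (primrec_colorNeighbor.comp
    (hcol.pair (hcolor.pair (snd.comp fst)))).to_comp.to₂

theorem mem_distMachine_iff {c : Code} {p x z : BStr} :
    z ∈ distMachine c p x ↔ ∃ n,
      colorNeighbor (greedyColoring (enumCloseGraph c (p.length - 3)) n) (ofBits p) x = some z :=
  Nat.rfindOpt_mono fun hmn hz =>
    colorNeighbor_of_prefix (greedyColoring_prefix _ hmn) hz

theorem IDist_distMachine_le {c : Code} {U : PFun2} (hc : IsCodeOf c U) {m : ℕ} {x y : BStr}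
    (hxy : (x, y) ∈ closeGraph U m) : IDist (distMachine c) x y ≤ (m + 3 : ℕ) := by
  set enum := enumCloseGraph c m
  obtain ⟨n, hn⟩ := exists_enumCloseGraph_eq hc hxy
  obtain ⟨col, hcol⟩ := exists_mem_greedyColoring_succ enum hn
  have hlt : col < 2 ^ (m + 3) := by
    have := snd_lt_of_mem_greedyColoring enum (fun _ _ => mem_closeGraph_of_enumCloseGraph hc)
      (encard_incidentEdges_closeGraph_le U m) hcol
    rwa [← pow_succ'] at this
  have hlen : (toBits (m + 3) col).length - 3 = m := by simp
  have hbits : ofBits (toBits (m + 3) col) = col := ofBits_toBits hlt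
  obtain ⟨hx, hy⟩ := colorNeighbor_eq_of_isProperColoring
    (isProperColoring_greedyColoring enum (n + 1)) hcol
  refine sInf_le ⟨toBits (m + 3) col, by simp, ?_, ?_⟩
  · exact mem_distMachine_iff.2 ⟨n + 1, by rw [hlen, hbits]; exact hx⟩
  · exact mem_distMachine_iff.2 ⟨n + 1, by rw [hlen, hbits]; exact hy⟩

theorem IDist_distMachine_le_max {c : Code} {U : PFun2} (hc : IsCodeOf c U) (x y : BStr) :
    IDist (distMachine c) x y ≤ max (Kcond U x y) (Kcond U y x) + 3 := by
  induction hmax : max (Kcond U x y) (Kcond U y x) using ENat.recTopCoe with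
  | top => simp
  | coe m =>
    have hxy : (x, y) ∈ closeGraph U m := max_le_iff.1 hmax.le
    exact_mod_cast IDist_distMachine_le hc hxy

end PlainInformationDistance

/-- if `U` makes the plain information distance minimal up to additive
constants, then `D_U(x,y) = max(K(x|y), K(y|x)) + O(1)`. -/
theorem plain_distance_characterization
    (U : PFun2) (hU : IsMachine U)
    (hUopt : ∀ V : PFun2, IsMachine V → ∃ c : ℕ, ∀ x y : BStr,
      IDist U x y ≤ IDist V x y + (c : ℕ∞))
    (W : PFun2) (hW : OptimalPlainK W) :
    ∃ c : ℕ, ∀ x y : BStr,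
      IDist U x y ≤ max (Kcond W x y) (Kcond W y x) + (c : ℕ∞) ∧
      max (Kcond W x y) (Kcond W y x) ≤ IDist U x y + (c : ℕ∞) := by
  open PlainInformationDistance in
  obtain ⟨code, hcode⟩ := exists_isCodeOf hW.1
  obtain ⟨c₀, hU_le⟩ := hUopt (distMachine code) (isMachine_distMachine code)
  obtain ⟨c₁, hW_le⟩ := hW.2 U hU
  refine ⟨c₀ + c₁ + 3, fun x y => ⟨?_, ?_⟩⟩
  · calc IDist U x y ≤ IDist (distMachine code) x y + c₀ := hU_le x y
      _ ≤ max (Kcond W x y) (Kcond W y x) + 3 + c₀ := by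
          gcongr; exact IDist_distMachine_le_max hcode x y
      _ ≤ max (Kcond W x y) (Kcond W y x) + (c₀ + c₁ + 3 : ℕ) := by
          rw [add_assoc]; gcongr; norm_cast; omega
  · calc max (Kcond W x y) (Kcond W y x) ≤ max (Kcond U x y) (Kcond U y x) + c₁ := by
          rw [← max_add_add_right]; exact max_le_max (hW_le y x) (hW_le x y)
      _ ≤ IDist U x y + c₁ := by gcongr; exact max_Kcond_le_IDist U x y
      _ ≤ IDist U x y + (c₀ + c₁ + 3 : ℕ) := by gcongr; omega
end

section
/- There exists a machine U such that K_U is optimal for plain conditional complexity (for every machine V there is a constant c with K_U(y|x) ≤ K_V(y|x) + c for all x,y), and yet D_U(x,y) = ∞ for some binary strings x and y (i.e., no program p satisfies both U(p,x)=y and U(p,y)=x). -/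
/-!
Take any optimal machine and let it accept a program only when the program's first bit equals the
first bit of the input (the empty input counting as starting with `false`), running the rest of
the program as before. This costs one bit, so the new machine is still optimal. But one program
can then only succeed on inputs sharing its first bit, so no program converts `[]` into `[true]`
and back, and `D([], [true]) = ∞`.
-/

open scoped ENNReal

open Encodable Denumerable
open Nat.Partrec (Code)

theorem Kcond_le_length {U : PFun2} {p x y : BStr} (h : y ∈ U p x) :
    Kcond U y x ≤ p.length :=
  sInf_le ⟨p, rfl, h⟩

theorem Kcond_le_add_of_simulation {U V : PFun2} {x y : BStr} (c : ℕ) (f : BStr → BStr)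
    (hlen : ∀ p, (f p).length ≤ p.length + c) (hsim : ∀ p, y ∈ V p x → y ∈ U (f p) x) :
    Kcond U y x ≤ Kcond V y x + c := by
  rcases Set.eq_empty_or_nonempty {n : ℕ∞ | ∃ p : BStr, (p.length : ℕ∞) = n ∧ y ∈ V p x}
    with hempty | hne
  · simp [Kcond, hempty]
  · obtain ⟨p, hp, hy⟩ := csInf_mem hne
    calc Kcond U y x ≤ (f p).length := Kcond_le_length (hsim p hy)
      _ ≤ p.length + c := by exact_mod_cast hlen p
      _ = Kcond V y x + c := by rw [hp, Kcond]

def unaryPrefix (n : ℕ) (q : BStr) : BStr := List.replicate n true ++ false :: q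

def unaryLength (p : BStr) : ℕ := p.findIdx (! ·)

def unaryRest (p : BStr) : BStr := p.drop (unaryLength p + 1)

@[simp]
theorem unaryLength_unaryPrefix (n : ℕ) (q : BStr) : unaryLength (unaryPrefix n q) = n := by
  induction n with
  | zero => simp [unaryLength, unaryPrefix, List.findIdx_cons]
  | succ n ih => simpa [unaryLength, unaryPrefix, List.replicate_succ, List.findIdx_cons] using ih

@[simp]
theorem unaryRest_unaryPrefix (n : ℕ) (q : BStr) : unaryRest (unaryPrefix n q) = q := by
  rw [unaryRest, unaryLength_unaryPrefix, unaryPrefix, List.drop_append]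
  simp

theorem length_unaryPrefix (n : ℕ) (q : BStr) : (unaryPrefix n q).length = q.length + (n + 1) := by
  simp only [unaryPrefix, List.length_append, List.length_replicate, List.length_cons]
  omega

/-- The program `1ᵉ0q` runs the code with index `e` on the pair `(q, x)`. -/
def universalMachine : PFun2 := fun p x =>
  ((ofNat Code (unaryLength p)).eval (encode (unaryRest p, x))).bind fun m =>
    (decode (α := BStr) m : Part BStr)

theorem isMachine_universalMachine : IsMachine universalMachine := by
  have hlen : Primrec fun a : BStr × BStr => unaryLength a.1 :=
    Primrec.list_findIdx .fst (Primrec.not.comp .snd).to₂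
  have hrest : Primrec fun a : BStr × BStr => unaryRest a.1 :=
    Primrec.list_drop.comp (Primrec.succ.comp hlen) .fst
  exact (Code.eval_part.comp ((Computable.ofNat Code).comp hlen.to_comp)
    (Primrec.encode.comp (hrest.pair .snd)).to_comp).bind
    (Computable.ofOption (Computable.decode.comp .snd)).to₂

theorem universalMachine_simulates {V : PFun2} (hV : IsMachine V) :
    ∃ e : ℕ, ∀ q x y, y ∈ V q x → y ∈ universalMachine (unaryPrefix e q) x := by
  obtain ⟨cV, hcV⟩ := Code.exists_code.1 hV
  refine ⟨encode cV, fun q x y hy => ?_⟩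
  simp only [universalMachine, unaryLength_unaryPrefix, unaryRest_unaryPrefix, ofNat_encode, hcV]
  simpa [encodek] using hy

theorem optimalPlainK_universalMachine : OptimalPlainK universalMachine := by
  refine ⟨isMachine_universalMachine, fun V hV => ?_⟩
  obtain ⟨e, he⟩ := universalMachine_simulates hV
  exact ⟨e + 1, fun x y => Kcond_le_add_of_simulation _ _
    (fun q => (length_unaryPrefix e q).le) (fun q => he q x y)⟩

def guardedMachine (U : PFun2) : PFun2 := fun p x =>
  if p.head? = some x.headI then U p.tail x else Part.none

theorem mem_guardedMachine {U : PFun2} {p x y : BStr} :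
    y ∈ guardedMachine U p x ↔ p.head? = some x.headI ∧ y ∈ U p.tail x := by
  unfold guardedMachine
  split_ifs with h <;> simp [h, Part.notMem_none]

theorem isMachine_guardedMachine {U : PFun2} (hU : IsMachine U) :
    IsMachine (guardedMachine U) := by
  refine (Partrec.cond (c := fun a : BStr × BStr => decide (a.1.head? = some a.2.headI))
    (Primrec.eq.comp (Primrec.list_head?.comp .fst)
      (Primrec.option_some.comp (Primrec.list_headI.comp .snd))).decide.to_comp
    (hU.comp (Primrec.list_tail.comp .fst).to_comp .snd) Partrec.none).of_eq fun a => ?_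
  simp only [guardedMachine, Bool.cond_decide]

theorem IDist_guardedMachine_eq_top (U : PFun2) {x y : BStr} (h : x.headI ≠ y.headI) :
    IDist (guardedMachine U) x y = ⊤ := by
  refine sInf_eq_top.2 fun n ⟨p, _, hxy, hyx⟩ => absurd ?_ h
  exact Option.some_injective _ <|
    (mem_guardedMachine.1 hxy).1.symm.trans (mem_guardedMachine.1 hyx).1

theorem optimalPlainK_guardedMachine {U : PFun2} (hU : OptimalPlainK U) :
    OptimalPlainK (guardedMachine U) := by
  refine ⟨isMachine_guardedMachine hU.1, fun V hV => ?_⟩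
  obtain ⟨c, hc⟩ := hU.2 V hV
  refine ⟨c + 1, fun x y => ?_⟩
  calc Kcond (guardedMachine U) y x ≤ Kcond U y x + 1 :=
        Kcond_le_add_of_simulation 1 (x.headI :: ·) (fun _ => le_rfl)
          (fun p hp => mem_guardedMachine.2 ⟨rfl, hp⟩)
    _ ≤ Kcond V y x + c + 1 := by gcongr; exact hc x y
    _ = Kcond V y x + (c + 1 : ℕ) := by push_cast; ring

/-- there is a machine `U` optimal for plain conditional complexity
such that `D_U(x,y)` is infinite for some strings `x`, `y`. -/
theorem exists_optimalK_machine_with_infinite_distance :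
    ∃ U : PFun2, IsMachine U ∧
      (∀ V : PFun2, IsMachine V → ∃ c : ℕ, ∀ x y : BStr,
        Kcond U y x ≤ Kcond V y x + (c : ℕ∞)) ∧
      ∃ x y : BStr, IDist U x y = ⊤ := by
  obtain ⟨hmachine, hoptimal⟩ := optimalPlainK_guardedMachine optimalPlainK_universalMachine
  exact ⟨_, hmachine, hoptimal, [], [true], IDist_guardedMachine_eq_top _ (by decide)⟩
end

section
/- There exist two symmetric upper semicomputable functions E₁, E₂ : pairs of binary strings → ℕ ∪ {∞}, each satisfying the triangle inequality (Eᵢ(x,z) ≤ Eᵢ(x,y) + Eᵢ(y,z) for all x,y,z) and the ball condition (there is a constant c with #{y : Eᵢ(x,y) < n} ≤ c·2^n for all x and n), such that for every constant c' and every symmetric function E with E(x,y) ≤ min(E₁(x,y), E₂(x,y)) + c' for all x,y, the function E cannot satisfy both the ball condition and the triangle inequality. -/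
/-!
`prefixDist` is the path distance `|x| + |y| - 2·lcp(x, y)` in the binary prefix tree and
`suffixDist` the same distance on reversed strings. Both are primitive recursive tree metrics,
and a ball of radius `n` in the prefix tree has fewer than `2^(n+1)` points.

If `E ≤ min prefixDist suffixDist + c` satisfies the triangle inequality, then going through `u x`
gives `E(x, u x v) ≤ (|u| + c) + (|v| + c)`. For the marker `x = 0^m 1` the decomposition `u x v`
with `|u| ≤ m` is unique, so the `(m + 1)·2^m` strings with `|u| + |v| = m` lie in the
`E`-ball of radius `m + 2c + 1` around `x`. For `m = b·2^(2c+1)` these are more than the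
`b·2^(m+2c+1) = m·2^m` points the ball condition with constant `b` allows.
-/

open scoped ENNReal

/-- `E` is upper semicomputable: the set `{(x,y,n) : E(x,y) < n}` is computably
enumerable (i.e., the corresponding semidecision function is partial computable). -/
def UpperSemicomputable (E : BStr → BStr → ℕ∞) : Prop :=
  Partrec fun z : BStr × BStr × ℕ =>
    Part.assert (E z.1 z.2.1 < (z.2.2 : ℕ∞)) fun _ => Part.some ()

/-- The ball condition: there is a constant `c` such that for every `x` and `n`,
at most `c·2^n` strings `y` satisfy `E(x,y) < n`. -/
def BallCond (E : BStr → BStr → ℕ∞) : Prop :=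
  ∃ c : ℕ, ∀ (x : BStr) (n : ℕ) (F : Finset BStr),
    (∀ y ∈ F, E x y < (n : ℕ∞)) → F.card ≤ c * 2 ^ n

/-- The triangle inequality for a `ℕ∞`-valued function on pairs of strings. -/
def Triangle (E : BStr → BStr → ℕ∞) : Prop :=
  ∀ x y z : BStr, E x z ≤ E x y + E y z

namespace List

variable {α : Type*} [DecidableEq α]

def commonPrefixLength (x y : List α) : ℕ :=
  Nat.findGreatest (fun k => x.take k = y.take k) x.length

theorem le_commonPrefixLength_iff {x y : List α} {k : ℕ} :
    k ≤ commonPrefixLength x y ↔ k ≤ x.length ∧ k ≤ y.length ∧ x.take k = y.take k := by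
  constructor
  · intro hk
    have hle : commonPrefixLength x y ≤ x.length := Nat.findGreatest_le _
    have htake : x.take (commonPrefixLength x y) = y.take (commonPrefixLength x y) :=
      Nat.findGreatest_spec (P := fun k => x.take k = y.take k) (Nat.zero_le _) (by simp)
    have hxy : x.take k = y.take k := by
      rw [← min_eq_left hk, ← take_take, htake, take_take]
    have hlen := congrArg length hxy
    simp only [length_take] at hlen
    exact ⟨hk.trans hle, by omega, hxy⟩
  · rintro ⟨hx, -, hxy⟩
    exact Nat.le_findGreatest hx hxy

theorem commonPrefixLength_comm (x y : List α) :
    commonPrefixLength x y = commonPrefixLength y x :=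
  eq_of_forall_le_iff fun k => by
    simp only [le_commonPrefixLength_iff, eq_comm (a := x.take k)]
    tauto

theorem commonPrefixLength_le_length_left (x y : List α) : commonPrefixLength x y ≤ x.length :=
  (le_commonPrefixLength_iff.1 (le_refl (commonPrefixLength x y))).1

theorem commonPrefixLength_le_length_right (x y : List α) : commonPrefixLength x y ≤ y.length :=
  (le_commonPrefixLength_iff.1 (le_refl (commonPrefixLength x y))).2.1

theorem min_commonPrefixLength_le (x y z : List α) :
    min (commonPrefixLength x y) (commonPrefixLength y z) ≤ commonPrefixLength x z := by
  set k := min (commonPrefixLength x y) (commonPrefixLength y z)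
  obtain ⟨hx, -, hxy⟩ := le_commonPrefixLength_iff.1 (min_le_left _ _ : k ≤ _)
  obtain ⟨-, hz, hyz⟩ := le_commonPrefixLength_iff.1 (min_le_right _ _ : k ≤ _)
  exact le_commonPrefixLength_iff.2 ⟨hx, hz, hxy.trans hyz⟩

theorem take_commonPrefixLength_append_drop (x y : List α) :
    x.take (commonPrefixLength x y) ++ y.drop (commonPrefixLength x y) = y := by
  rw [(le_commonPrefixLength_iff.1 (le_refl (commonPrefixLength x y))).2.2, take_append_drop]

theorem commonPrefixLength_append_right (x s : List α) :
    commonPrefixLength x (x ++ s) = x.length :=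
  (commonPrefixLength_le_length_left _ _).antisymm <|
    le_commonPrefixLength_iff.2 ⟨le_rfl, by simp, by simp⟩

def prefixDist (x y : List α) : ℕ :=
  (x.length - commonPrefixLength x y) + (y.length - commonPrefixLength x y)

theorem prefixDist_comm (x y : List α) : prefixDist x y = prefixDist y x := by
  rw [prefixDist, prefixDist, commonPrefixLength_comm, Nat.add_comm]

theorem prefixDist_triangle (x y z : List α) :
    prefixDist x z ≤ prefixDist x y + prefixDist y z := by
  have := min_commonPrefixLength_le x y z
  have := commonPrefixLength_le_length_left x y
  have := commonPrefixLength_le_length_right x y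
  have := commonPrefixLength_le_length_left y z
  have := commonPrefixLength_le_length_right y z
  unfold prefixDist
  omega

theorem prefixDist_append_right (x s : List α) : prefixDist x (x ++ s) = s.length := by
  simp [prefixDist, commonPrefixLength_append_right]

def suffixDist (x y : List α) : ℕ := prefixDist x.reverse y.reverse

theorem suffixDist_comm (x y : List α) : suffixDist x y = suffixDist y x :=
  prefixDist_comm _ _

theorem suffixDist_triangle (x y z : List α) :
    suffixDist x z ≤ suffixDist x y + suffixDist y z :=
  prefixDist_triangle _ _ _

theorem suffixDist_append_left (x s : List α) : suffixDist x (s ++ x) = s.length := by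
  simp [suffixDist, prefixDist_append_right]

end List

namespace Primrec

variable {α : Type*} [Primcodable α] [DecidableEq α]

theorem list_commonPrefixLength :
    Primrec₂ (List.commonPrefixLength : List α → List α → ℕ) :=
  nat_findGreatest (list_length.comp fst) <|
    Primrec.eq.comp (list_take.comp snd (fst.comp fst)) (list_take.comp snd (snd.comp fst))

theorem list_prefixDist : Primrec₂ (List.prefixDist : List α → List α → ℕ) :=
  nat_add.comp (nat_sub.comp (list_length.comp fst) list_commonPrefixLength)
    (nat_sub.comp (list_length.comp snd) list_commonPrefixLength)

theorem list_suffixDist : Primrec₂ (List.suffixDist : List α → List α → ℕ) :=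
  list_prefixDist.comp (list_reverse.comp fst) (list_reverse.comp snd)

end Primrec

section

open Finset

section Words

variable (α : Type*) [Fintype α] [DecidableEq α]

def wordsOfLength (k : ℕ) : Finset (List α) :=
  univ.image (List.ofFn : (Fin k → α) → List α)

def wordsOfLengthLT (k : ℕ) : Finset (List α) :=
  (range k).biUnion (wordsOfLength α)

variable {α}

@[simp]
theorem mem_wordsOfLength {k : ℕ} {w : List α} : w ∈ wordsOfLength α k ↔ w.length = k := by
  refine ⟨fun hw => ?_, fun hw => ?_⟩
  · obtain ⟨f, -, rfl⟩ := mem_image.1 hw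
    exact List.length_ofFn
  · subst hw
    exact mem_image.2 ⟨fun i => w[i], mem_univ _, List.ofFn_getElem⟩

@[simp]
theorem mem_wordsOfLengthLT {k : ℕ} {w : List α} :
    w ∈ wordsOfLengthLT α k ↔ w.length < k := by
  simp [wordsOfLengthLT]

theorem card_wordsOfLength (k : ℕ) : #(wordsOfLength α k) = Fintype.card α ^ k := by
  rw [wordsOfLength, card_image_of_injective _ List.ofFn_injective, card_univ, Fintype.card_fun,
    Fintype.card_fin]

theorem card_wordsOfLengthLT_lt (hα : 2 ≤ Fintype.card α) (k : ℕ) :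
    #(wordsOfLengthLT α k) < Fintype.card α ^ k :=
  calc #(wordsOfLengthLT α k) ≤ ∑ i ∈ range k, #(wordsOfLength α i) := card_biUnion_le
    _ = ∑ i ∈ range k, Fintype.card α ^ i := by simp only [card_wordsOfLength]
    _ < Fintype.card α ^ k := Nat.geomSum_lt hα fun _ => mem_range.1

end Words

theorem card_le_of_forall_prefixDist_lt (x : List Bool) (n : ℕ) (F : Finset (List Bool))
    (hF : ∀ y ∈ F, x.prefixDist y < n) : #F ≤ 2 * 2 ^ n := by
  -- the tree path from `x` to `y` climbs `up y` edges, then descends along `down y`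
  let up (y : List Bool) : ℕ := x.length - x.commonPrefixLength y
  let down (y : List Bool) : List Bool := y.drop (x.commonPrefixLength y)
  have hmaps : Set.MapsTo (fun y => (⟨up y, down y⟩ : Σ _ : ℕ, List Bool)) F
      ((range n).sigma fun a => wordsOfLengthLT Bool (n - a)) := by
    intro y hy
    have hy := hF y hy
    have := x.commonPrefixLength_le_length_left y
    simp only [List.prefixDist] at hy
    simp [up, down]
    omega
  have hinj : Set.InjOn (fun y => (⟨up y, down y⟩ : Σ _ : ℕ, List Bool)) F := by
    intro y _ y' _ h
    simp only [Sigma.mk.inj_iff, heq_iff_eq, up, down] at h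
    have := x.commonPrefixLength_le_length_left y
    have := x.commonPrefixLength_le_length_left y'
    have hcpl : x.commonPrefixLength y = x.commonPrefixLength y' := by omega
    rw [← x.take_commonPrefixLength_append_drop y, ← x.take_commonPrefixLength_append_drop y',
      h.2, hcpl]
  calc #F ≤ ∑ a ∈ range n, #(wordsOfLengthLT Bool (n - a)) := by
        rw [← card_sigma]; exact card_le_card_of_injOn _ hmaps hinj
    _ ≤ ∑ a ∈ range n, 2 ^ (n - a) :=
        sum_le_sum fun a _ => (card_wordsOfLengthLT_lt (by simp) _).le
    _ = ∑ a ∈ range n, 2 ^ (n - 1 - a + 1) :=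
        sum_congr rfl fun a ha => by rw [mem_range] at ha; congr 1; omega
    _ = ∑ a ∈ range n, 2 ^ (a + 1) := sum_range_reflect (fun a => 2 ^ (a + 1)) n
    _ = 2 * ∑ a ∈ range n, 2 ^ a := by simp only [pow_succ', mul_sum]
    _ ≤ 2 * 2 ^ n := Nat.mul_le_mul_left _ (Nat.geomSum_lt le_rfl fun _ => mem_range.1).le

theorem upperSemicomputable_natCast {d : BStr → BStr → ℕ} (hd : Primrec₂ d) :
    UpperSemicomputable fun x y => (d x y : ℕ∞) :=
  ComputablePred.to_re <| PrimrecPred.computablePred <|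
    (Primrec.nat_lt.comp (hd.comp Primrec.fst (Primrec.fst.comp Primrec.snd))
      (Primrec.snd.comp Primrec.snd)).of_eq fun _ => Nat.cast_lt.symm

theorem triangle_natCast {d : BStr → BStr → ℕ} (hd : ∀ x y z, d x z ≤ d x y + d y z) :
    Triangle fun x y => (d x y : ℕ∞) :=
  fun x y z => by dsimp only; exact_mod_cast hd x y z

theorem BallCond.comp_injective {E : BStr → BStr → ℕ∞} (hE : BallCond E) {f : BStr → BStr}
    (hf : Function.Injective f) : BallCond fun x y => E (f x) (f y) := by
  obtain ⟨c, hc⟩ := hE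
  refine ⟨c, fun x n F hF => ?_⟩
  rw [← card_image_of_injective F hf]
  exact hc (f x) n _ (forall_mem_image.2 hF)

theorem ballCond_prefixDist : BallCond fun x y => (x.prefixDist y : ℕ∞) :=
  ⟨2, fun x n F hF => card_le_of_forall_prefixDist_lt x n F fun y hy => Nat.cast_lt.1 (hF y hy)⟩

theorem ballCond_suffixDist : BallCond fun x y => (x.suffixDist y : ℕ∞) :=
  ballCond_prefixDist.comp_injective List.reverse_injective

def marker (m : ℕ) : BStr := List.replicate m false ++ [true]

-- If `u` were shorter, the final `true` of its marker would fall on a `false` of the other marker.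
theorem length_le_of_append_marker_append_eq {m : ℕ} {u u' v v' : BStr} (hu' : u'.length ≤ m)
    (h : u ++ marker m ++ v = u' ++ marker m ++ v') : u'.length ≤ u.length := by
  by_contra! hlt
  have hl : (u ++ marker m ++ v)[u.length + m]? = some true := by
    simp [marker]
  have hr : (u' ++ marker m ++ v')[u.length + m]? = some false := by
    rw [List.append_assoc, List.getElem?_append_right (by omega), marker, List.append_assoc,
      List.getElem?_append_left (by simp; omega), List.getElem?_replicate, if_pos (by omega)]
  rw [h, hr] at hl
  simp at hl

theorem append_marker_append_inj {m : ℕ} {u u' v v' : BStr} (hu : u.length ≤ m)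
    (hu' : u'.length ≤ m) (h : u ++ marker m ++ v = u' ++ marker m ++ v') :
    u = u' ∧ v = v' := by
  have hlen : u.length = u'.length :=
    (length_le_of_append_marker_append_eq hu h.symm).antisymm
      (length_le_of_append_marker_append_eq hu' h)
  obtain ⟨huu', hv⟩ := List.append_inj h (by simp [hlen])
  exact ⟨(List.append_inj huu' hlen).1, hv⟩

def markedWords (m : ℕ) : Finset BStr :=
  (range (m + 1) ×ˢ wordsOfLength Bool m).image fun p => p.2.take p.1 ++ marker m ++ p.2.drop p.1

theorem card_markedWords (m : ℕ) : #(markedWords m) = (m + 1) * 2 ^ m := by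
  rw [markedWords, card_image_of_injOn, card_product, card_range, card_wordsOfLength,
    Fintype.card_bool]
  rintro ⟨i, w⟩ hiw ⟨i', w'⟩ hiw' h
  simp only [coe_product, Set.mem_prod, mem_coe, mem_range, mem_wordsOfLength] at hiw hiw'
  obtain ⟨hu, hv⟩ := append_marker_append_inj (by simp; omega) (by simp; omega) h
  have hi : i = i' := by
    have := congrArg List.length hu
    simp only [List.length_take] at this
    omega
  subst hi
  rw [Prod.mk.injEq, ← List.take_append_drop i w, ← List.take_append_drop i w', hu, hv]
  exact ⟨rfl, rfl⟩

theorem Triangle.apply_append_append_le {E : BStr → BStr → ℕ∞} (hT : Triangle E) {c : ℕ}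
    (hE : ∀ x y, E x y ≤ min (x.prefixDist y : ℕ∞) (x.suffixDist y) + c) (x u v : BStr) :
    E x (u ++ x ++ v) ≤ (u.length + v.length + 2 * c : ℕ) :=
  calc E x (u ++ x ++ v) ≤ E x (u ++ x) + E (u ++ x) (u ++ x ++ v) := hT _ _ _
    _ ≤ (u.length + c) + (v.length + c) := by
        gcongr
        · refine (hE _ _).trans (add_le_add (min_le_of_right_le ?_) le_rfl)
          rw [List.suffixDist_append_left]
        · refine (hE _ _).trans (add_le_add (min_le_of_left_le ?_) le_rfl)
          rw [List.prefixDist_append_right]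
    _ = (u.length + v.length + 2 * c : ℕ) := by push_cast; ring

theorem not_ballCond_and_triangle_of_le_min_add {E : BStr → BStr → ℕ∞} {c : ℕ}
    (hE : ∀ x y, E x y ≤ min (x.prefixDist y : ℕ∞) (x.suffixDist y) + c) :
    ¬(BallCond E ∧ Triangle E) := by
  rintro ⟨⟨b, hball⟩, hT⟩
  set m := b * 2 ^ (2 * c + 1) with hm
  have hclose : ∀ y ∈ markedWords m, E (marker m) y < (m + 2 * c + 1 : ℕ) := by
    simp only [markedWords, forall_mem_image, mem_product, mem_range, mem_wordsOfLength]
    rintro ⟨i, w⟩ ⟨-, hw : w.length = m⟩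
    refine (hT.apply_append_append_le hE _ _ _).trans_lt (Nat.cast_lt.2 ?_)
    simp only [List.length_take, List.length_drop]
    omega
  have hcard := hball (marker m) (m + 2 * c + 1) _ hclose
  rw [card_markedWords] at hcard
  have : (m + 1) * 2 ^ m ≤ m * 2 ^ m :=
    calc (m + 1) * 2 ^ m ≤ b * 2 ^ (m + 2 * c + 1) := hcard
      _ = m * 2 ^ m := by rw [hm, add_assoc, pow_add]; ring
  nlinarith [Nat.one_le_two_pow (n := m)]

end

/-- there are two symmetric upper semicomputable functions, each
satisfying the triangle inequality and the ball condition, such that no symmetric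
function bounded by their minimum (up to an additive constant) can satisfy both
the ball condition and the triangle inequality. -/
theorem no_maximal_function_with_triangle_inequality :
    ∃ E₁ E₂ : BStr → BStr → ℕ∞,
      (∀ x y : BStr, E₁ x y = E₁ y x) ∧ UpperSemicomputable E₁ ∧
        Triangle E₁ ∧ BallCond E₁ ∧
      (∀ x y : BStr, E₂ x y = E₂ y x) ∧ UpperSemicomputable E₂ ∧
        Triangle E₂ ∧ BallCond E₂ ∧
      ∀ (c' : ℕ) (E : BStr → BStr → ℕ∞), (∀ x y : BStr, E x y = E y x) →
        (∀ x y : BStr, E x y ≤ min (E₁ x y) (E₂ x y) + (c' : ℕ∞)) →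
        ¬ (BallCond E ∧ Triangle E) :=
  ⟨fun x y => (x.prefixDist y : ℕ∞), fun x y => (x.suffixDist y : ℕ∞),
    fun x y => congrArg Nat.cast (x.prefixDist_comm y),
    upperSemicomputable_natCast Primrec.list_prefixDist,
    triangle_natCast List.prefixDist_triangle, ballCond_prefixDist,
    fun x y => congrArg Nat.cast (x.suffixDist_comm y),
    upperSemicomputable_natCast Primrec.list_suffixDist,
    triangle_natCast List.suffixDist_triangle, ballCond_suffixDist,
    fun _ _ _ hE => not_ballCond_and_triangle_of_le_min_add hE⟩
end

section
/- Let D be the prefix-free non-bipartite information distance. There is a constant c such that for all binary strings x,y: E(x,y) − c ≤ D(x,y) ≤ E(x,y) + c·log₂(E(x,y) + 2) + c. That is, the prefix information distance equals E(x,y) up to an additive term O(log E(x,y)). -/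
open scoped ENNReal

/-- A machine is prefix-free (in its first argument) if for each second argument `x`,
its domain contains no string that is a proper prefix of another element. -/
def PrefixFree (U : PFun2) : Prop :=
  ∀ (x p q : BStr), (U p x).Dom → (U q x).Dom → p <+: q → p = q

/-- A machine is prefix-stable (in its first argument) if whenever `U(p,x)` is defined
and `p` is a prefix of `p'`, then `U(p',x)` is defined and has the same value. -/
def PrefixStable (U : PFun2) : Prop :=
  ∀ (x p q y : BStr), p <+: q → y ∈ U p x → y ∈ U q x

/-- `U` is a prefix-free machine that is optimal for prefix conditional complexity
among prefix-free machines. -/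
def OptimalPrefixK (U : PFun2) : Prop :=
  IsMachine U ∧ PrefixFree U ∧ ∀ V : PFun2, IsMachine V → PrefixFree V →
    ∃ c : ℕ, ∀ x y : BStr, Kcond U y x ≤ Kcond V y x + (c : ℕ∞)

/-- `E(x,y) = max(K(x|y), K(y|x))`, computed with the machine `W`. -/
noncomputable def Emax (W : PFun2) (x y : BStr) : ℕ∞ :=
  max (Kcond W x y) (Kcond W y x)

/-- `U` is a prefix-free machine making the (non-bipartite) information distance
minimal up to additive constants among prefix-free machines. -/
def OptimalPrefixDist (U : PFun2) : Prop :=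
  IsMachine U ∧ PrefixFree U ∧ ∀ V : PFun2, IsMachine V → PrefixFree V →
    ∃ c : ℕ, ∀ x y : BStr, IDist U x y ≤ IDist V x y + (c : ℕ∞)

/-- Base-2 logarithm on `ℕ∞` (with `log ∞ = ∞`). -/
noncomputable def elog (e : ℕ∞) : ℕ∞ :=
  if e = ⊤ then ⊤ else ((Nat.log 2 e.toNat : ℕ) : ℕ∞)

/-!
For the lower bound, `U` is itself a prefix-free machine and a program of `U` for the distance
also shows `K_U(x|y), K_U(y|x) ≤ D(x,y)`, so optimality of `W` gives `E(x,y) ≤ D(x,y) + O(1)`.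

For the upper bound, fix `e` and join two strings `x`, `y` whenever programs of length at most `e`
for `W` compute `y` from `x` and `x` from `y`. A vertex has at most `2 ^ (e + 2)` incident edges,
since a neighbour is determined by a program computing it from the vertex. The edges can be
enumerated, and colouring them greedily in order of appearance never changes a colour and uses
fewer than `2 ^ (e + 4)` colours. The program consisting of a self-delimiting code for `e` and a
colour `i` in `e + 4` bits, of length `e + O(log e)`, waits on input `x` for the edge at `x` of
colour `i` to appear and outputs its other endpoint. Such programs form a prefix-free code, so
optimality of `U` gives `D(x,y) ≤ E(x,y) + O(log E(x,y))`.
-/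

namespace InformationDistance

open List Encodable Nat.Partrec Code

lemma IDist_le_length {V : PFun2} {x y p : BStr} (h : y ∈ V p x) (h' : x ∈ V p y) :
    IDist V x y ≤ p.length :=
  sInf_le ⟨p, rfl, h, h'⟩

lemma exists_program_of_Kcond_le {V : PFun2} {x y : BStr} {e : ℕ} (h : Kcond V y x ≤ e) :
    ∃ p : BStr, p.length ≤ e ∧ y ∈ V p x := by
  have hne : {n : ℕ∞ | ∃ p : BStr, (p.length : ℕ∞) = n ∧ y ∈ V p x}.Nonempty := by
    by_contra hempty
    rw [Set.not_nonempty_iff_eq_empty] at hempty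
    simp [Kcond, hempty] at h
  obtain ⟨p, hp, hpy⟩ := csInf_mem hne
  exact ⟨p, by exact_mod_cast hp.trans_le h, hpy⟩

lemma Emax_le_IDist (V : PFun2) (x y : BStr) : Emax V x y ≤ IDist V x y :=
  max_le (sInf_le_sInf fun _ ⟨p, hp, _, h⟩ => ⟨p, hp, h⟩)
    (sInf_le_sInf fun _ ⟨p, hp, h, _⟩ => ⟨p, hp, h⟩)

lemma Emax_le_IDist_add {W V : PFun2} {c : ℕ} (h : ∀ x y, Kcond W y x ≤ Kcond V y x + c)
    (x y : BStr) : Emax W x y ≤ IDist V x y + c :=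
  calc Emax W x y ≤ Emax V x y + c := by
        rw [Emax, Emax, ← max_add_add_right]
        exact max_le_max (h y x) (h x y)
    _ ≤ IDist V x y + c := by gcongr; exact Emax_le_IDist V x y

lemma elog_natCast (n : ℕ) : elog n = Nat.log 2 n := by
  simp [elog]

def ofBits (l : List Bool) : ℕ := Nat.ofDigits 2 (l.map fun b => cond b 1 0)

lemma ofBits_bits (n : ℕ) : ofBits n.bits = n := by
  rw [ofBits, ← Nat.digits_two_eq_bits, Nat.ofDigits_digits]

lemma ofBits_append_replicate_false (l : List Bool) (k : ℕ) :
    ofBits (l ++ replicate k false) = ofBits l := by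
  simp [ofBits, Nat.ofDigits_append, Nat.ofDigits_replicate_zero]

lemma digit_lt_two {l : List Bool} : ∀ d ∈ l.map fun b => cond b 1 0, d < 2 := by
  simp only [mem_map]
  rintro _ ⟨b, -, rfl⟩
  cases b <;> simp

lemma ofBits_lt_two_pow (l : List Bool) : ofBits l < 2 ^ l.length := by
  simpa [ofBits] using Nat.ofDigits_lt_base_pow_length one_lt_two digit_lt_two

lemma ofBits_append_true_injective :
    Function.Injective fun l : List Bool => ofBits (l ++ [true]) := by
  intro l l' h
  -- the appended `true` is a leading digit `1`, so `Nat.digits` recovers the list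
  have hdigits (l : List Bool) :
      Nat.digits 2 (ofBits (l ++ [true])) = (l ++ [true]).map fun b => cond b 1 0 :=
    Nat.digits_ofDigits 2 one_lt_two _ digit_lt_two (by simp)
  have := hdigits l ▸ hdigits l' ▸ congrArg (Nat.digits 2) h
  simpa using map_injective_iff.2 (fun a b h => by cases a <;> cases b <;> simp_all) this

lemma primrec_ofBits : Primrec ofBits := by
  have hfoldr (l : List Bool) : l.foldr (fun b n => cond b 1 0 + 2 * n) 0 = ofBits l := by
    induction l with
    | nil => rfl
    | cons b l ih => simp_all [ofBits, Nat.ofDigits_cons]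
  have hstep : Primrec₂ fun (_ : List Bool) (p : Bool × ℕ) => cond p.1 1 0 + 2 * p.2 :=
    (Primrec.nat_add.comp
      (Primrec.cond (Primrec.fst.comp Primrec.snd) (Primrec.const 1) (Primrec.const 0))
      (Primrec.nat_mul.comp (Primrec.const 2) (Primrec.snd.comp Primrec.snd))).to₂
  exact (Primrec.list_foldr Primrec.id (Primrec.const 0) hstep).of_eq hfoldr

def padBits (w n : ℕ) : List Bool := n.bits ++ replicate (w - n.size) false

lemma length_padBits {w n : ℕ} (h : n < 2 ^ w) : (padBits w n).length = w := by
  have := Nat.size_le.2 h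
  simp only [padBits, length_append, Nat.size_eq_bits_len, length_replicate]
  omega

lemma ofBits_padBits (w n : ℕ) : ofBits (padBits w n) = n := by
  rw [padBits, ofBits_append_replicate_false, ofBits_bits]

def encodeProg (e i : ℕ) : List Bool :=
  replicate e.size true ++ false :: (e.bits ++ padBits (e + 4) i)

def splitProg (r : List Bool) : ℕ × List Bool :=
  let k := (r.takeWhile id).length
  let body := r.drop (k + 1)
  (ofBits (body.take k), body.drop k)

def decodeProg (r : List Bool) : Option (ℕ × ℕ) :=
  if (splitProg r).2.length = (splitProg r).1 + 4 then
    some ((splitProg r).1, ofBits (splitProg r).2)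
  else none

lemma splitProg_replicate_true_append (k : ℕ) (body : List Bool) :
    splitProg (replicate k true ++ false :: body) = (ofBits (body.take k), body.drop k) := by
  have hk : (replicate k true ++ false :: body).takeWhile id = replicate k true := by
    rw [takeWhile_append_of_pos (by simp)]
    simp
  have hbody := drop_length_add_append (l₁ := replicate k true) (l₂ := false :: body) 1
  rw [length_replicate] at hbody
  simp [splitProg, hk, hbody]

lemma splitProg_encodeProg (e i : ℕ) : splitProg (encodeProg e i) = (e, padBits (e + 4) i) := by
  rw [encodeProg, splitProg_replicate_true_append, ← Nat.size_eq_bits_len, take_left, drop_left,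
    ofBits_bits]

lemma decodeProg_encodeProg {e i : ℕ} (h : i < 2 ^ (e + 4)) :
    decodeProg (encodeProg e i) = some (e, i) := by
  simp [decodeProg, splitProg_encodeProg, length_padBits h, ofBits_padBits]

lemma splitProg_append {r : List Bool} (h : (splitProg r).2 ≠ []) (u : List Bool) :
    splitProg (r ++ u) = ((splitProg r).1, (splitProg r).2 ++ u) := by
  simp only [splitProg, ne_eq, drop_eq_nil_iff, length_drop, not_le] at h ⊢
  set k := (r.takeWhile id).length with hk
  have htw : (r ++ u).takeWhile id = r.takeWhile id := by
    rw [takeWhile_append, if_neg (by omega)]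
  rw [htw, ← hk, drop_append_of_le_length (by omega),
    take_append_of_le_length (by simp; omega), drop_append_of_le_length (by simp; omega)]

lemma eq_of_prefix_of_decodeProg_isSome {r r' : List Bool} (h : (decodeProg r).isSome)
    (h' : (decodeProg r').isSome) (hp : r <+: r') : r = r' := by
  obtain ⟨u, rfl⟩ := hp
  simp only [decodeProg, Option.isSome_ite] at h h'
  have hne : (splitProg r).2 ≠ [] := by
    intro hnil
    simp [hnil] at h
  rw [splitProg_append hne, length_append, h] at h'
  simpa using h'

lemma length_encodeProg_le {e i : ℕ} (h : i < 2 ^ (e + 4)) :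
    (encodeProg e i).length ≤ e + 2 * Nat.log 2 (e + 2) + 7 := by
  have hsize : e.size ≤ Nat.log 2 (e + 2) + 1 :=
    Nat.size_le.2 ((Nat.lt_pow_succ_log_self one_lt_two (e + 2)).trans_le' (by omega))
  simp only [encodeProg, length_append, length_replicate, length_cons, Nat.size_eq_bits_len,
    length_padBits h]
  omega

lemma primrec_decodeProg : Primrec decodeProg := by
  have hk : Primrec fun r : List Bool => (r.takeWhile id).length :=
    Primrec.list_length.comp (Primrec.list_takeWhile Primrec.id)
  have hbody : Primrec fun r : List Bool => r.drop ((r.takeWhile id).length + 1) :=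
    Primrec.list_drop.comp (Primrec.succ.comp hk) Primrec.id
  have hsplit : Primrec splitProg :=
    (primrec_ofBits.comp (Primrec.list_take.comp hk hbody)).pair (Primrec.list_drop.comp hk hbody)
  have hlevel : Primrec fun r => (splitProg r).1 + 4 :=
    Primrec.nat_add.comp (Primrec.fst.comp hsplit) (Primrec.const 4)
  exact Primrec.ite (Primrec.eq.comp (Primrec.list_length.comp (Primrec.snd.comp hsplit)) hlevel)
    (Primrec.option_some.comp ((Primrec.fst.comp hsplit).pair
      (primrec_ofBits.comp (Primrec.snd.comp hsplit))))
    (Primrec.const none)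

section GreedyColouring

variable {α : Type*} (adj : α → α → Prop) [DecidableRel adj]

def freeColour (acc : List (α × ℕ)) (a : α) : ℕ :=
  Nat.findGreatest (fun c => ∀ q ∈ acc, adj a q.1 → q.2 ≠ c) (acc.countP fun q => adj a q.1)

lemma freeColour_le (acc : List (α × ℕ)) (a : α) :
    freeColour adj acc a ≤ acc.countP fun q => adj a q.1 :=
  Nat.findGreatest_le _

lemma freeColour_ne {acc : List (α × ℕ)} {a : α} {q : α × ℕ} (hq : q ∈ acc)
    (h : adj a q.1) : q.2 ≠ freeColour adj acc a := by
  -- among the `k + 1` colours `0, …, k` at most `k` are used next to `a`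
  set k := acc.countP fun q => adj a q.1
  have hused : ((acc.filter fun q => adj a q.1).map Prod.snd).toFinset.card <
      (Finset.range (k + 1)).card := by
    refine (toFinset_card_le _).trans_lt ?_
    simp [k, countP_eq_length_filter]
  obtain ⟨c, hc, hcfree⟩ := Finset.exists_mem_notMem_of_card_lt_card hused
  refine Nat.findGreatest_spec (P := fun c => ∀ q ∈ acc, adj a q.1 → q.2 ≠ c)
    (Nat.lt_succ_iff.1 (Finset.mem_range.1 hc)) ?_ q hq h
  intro q hq hadj hqc
  exact hcfree (by simpa using ⟨q.1, hqc ▸ hq, hadj⟩)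

def greedyColouring (l : List α) : List (α × ℕ) :=
  l.foldl (fun acc a => acc ++ [(a, freeColour adj acc a)]) []

lemma greedyColouring_append_singleton (l : List α) (a : α) :
    greedyColouring adj (l ++ [a]) =
      greedyColouring adj l ++ [(a, freeColour adj (greedyColouring adj l) a)] := by
  simp [greedyColouring, foldl_append]

lemma map_fst_greedyColouring (l : List α) : (greedyColouring adj l).map Prod.fst = l := by
  induction l using reverseRecOn with
  | nil => rfl
  | append_singleton l a ih => simp [greedyColouring_append_singleton, ih]

lemma greedyColouring_prefix {l l' : List α} (h : l <+: l') :
    greedyColouring adj l <+: greedyColouring adj l' := by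
  obtain ⟨u, rfl⟩ := h
  induction u using reverseRecOn with
  | nil => simp
  | append_singleton u a ih =>
    rw [← append_assoc, greedyColouring_append_singleton]
    exact ih.trans (prefix_append _ _)

lemma pairwise_greedyColouring (l : List α) :
    (greedyColouring adj l).Pairwise fun q q' => adj q'.1 q.1 → q.2 ≠ q'.2 := by
  induction l using reverseRecOn with
  | nil => simp [greedyColouring]
  | append_singleton l a ih =>
    rw [greedyColouring_append_singleton, pairwise_append]
    refine ⟨ih, by simp, fun q hq q' hq' => ?_⟩
    rw [mem_singleton] at hq'
    subst hq'
    exact freeColour_ne adj hq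

lemma eq_of_mem_greedyColouring (hsymm : ∀ a b, adj a b → adj b a) {l : List α}
    {q q' : α × ℕ} (hq : q ∈ greedyColouring adj l) (hq' : q' ∈ greedyColouring adj l)
    (hadj : adj q.1 q'.1) (hcol : q.2 = q'.2) : q = q' := by
  by_contra hne
  have : Std.Symm fun q q' : α × ℕ => adj q'.1 q.1 → q.2 ≠ q'.2 :=
    ⟨fun q q' h hadj' => (h (hsymm _ _ hadj')).symm⟩
  exact (pairwise_greedyColouring adj l).forall hq hq' hne (hsymm _ _ hadj) hcol

lemma snd_le_countP_of_mem_greedyColouring {l : List α} {q : α × ℕ}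
    (hq : q ∈ greedyColouring adj l) : q.2 ≤ l.countP fun b => adj q.1 b := by
  induction l using reverseRecOn generalizing q with
  | nil => simp [greedyColouring] at hq
  | append_singleton l a ih =>
    rw [greedyColouring_append_singleton, mem_append, mem_singleton] at hq
    rw [countP_append]
    rcases hq with hq | rfl
    · exact (ih hq).trans (Nat.le_add_right _ _)
    · refine (freeColour_le adj _ a).trans (le_trans ?_ (Nat.le_add_right _ _))
      conv_rhs => rw [← map_fst_greedyColouring adj l]
      rw [countP_map]
      rfl

lemma primrec_greedyColouring [Primcodable α] (hadj : PrimrecRel adj) :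
    Primrec (greedyColouring adj) := by
  have hfree : PrimrecRel fun (x : List (α × ℕ) × α) (c : ℕ) =>
      ∀ q ∈ x.1, adj x.2 q.1 → q.2 ≠ c := by
    have hR : PrimrecRel fun (q : α × ℕ) (y : (List (α × ℕ) × α) × ℕ) =>
        adj y.1.2 q.1 → q.2 ≠ y.2 :=
      ((hadj.comp (Primrec.snd.comp (Primrec.fst.comp Primrec.snd))
        (Primrec.fst.comp Primrec.fst)).not.or
        (Primrec.eq.comp (Primrec.snd.comp Primrec.fst) (Primrec.snd.comp Primrec.snd)).not).of_eq
        fun _ => imp_iff_not_or.symm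
    exact hR.forall_mem_list.comp (Primrec.fst.comp Primrec.fst) Primrec₂.pair
  have hcount : Primrec fun x : List (α × ℕ) × α => x.1.countP fun q => adj x.2 q.1 := by
    have hR : PrimrecRel fun (q : α × ℕ) (x : List (α × ℕ) × α) => adj x.2 q.1 :=
      hadj.comp (Primrec.snd.comp Primrec.snd) (Primrec.fst.comp Primrec.fst)
    exact (Primrec.list_length.comp (hR.listFilter.comp Primrec.fst Primrec.id)).of_eq fun _ =>
      (countP_eq_length_filter ..).symm
  have hcolour : Primrec₂ (freeColour adj) := (Primrec.nat_findGreatest hcount hfree).to₂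
  have hstep : Primrec₂ fun (_ : List α) (p : List (α × ℕ) × α) =>
      p.1 ++ [(p.2, freeColour adj p.1 p.2)] :=
    (Primrec.list_concat.comp (Primrec.fst.comp Primrec.snd)
      ((Primrec.snd.comp Primrec.snd).pair (hcolour.comp (Primrec.fst.comp Primrec.snd)
        (Primrec.snd.comp Primrec.snd)))).to₂
  exact (Primrec.list_foldl Primrec.id (Primrec.const []) hstep).of_eq fun _ => rfl

end GreedyColouring

lemma countP_or_le_add {α : Type*} (p q : α → Bool) (l : List α) :
    l.countP (fun a => p a || q a) ≤ l.countP p + l.countP q := by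
  induction l with
  | nil => simp
  | cons a l ih => cases hp : p a <;> cases hq : q a <;> simp [hp, hq] <;> omega

def bitStrings : ℕ → List (List Bool)
  | 0 => [[]]
  | n + 1 => [] :: (bitStrings n).flatMap fun p => [false :: p, true :: p]

lemma mem_bitStrings {n : ℕ} {p : List Bool} : p ∈ bitStrings n ↔ p.length ≤ n := by
  induction n generalizing p with
  | zero => simp [bitStrings]
  | succ n ih =>
    rcases p with _ | ⟨b, p⟩
    · simp [bitStrings]
    · cases b <;> simp [bitStrings, ih]

lemma primrec_bitStrings : Primrec bitStrings := by
  have hcons (b : Bool) : Primrec₂ fun (_ : ℕ × List (List Bool)) (p : List Bool) => b :: p :=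
    (Primrec.list_cons.comp (Primrec.const b) Primrec.snd).to₂
  have hstep : Primrec₂ fun (_ : ℕ) (ps : List (List Bool)) =>
      [] :: ps.flatMap fun p => [false :: p, true :: p] :=
    (Primrec.list_cons.comp (Primrec.const []) (Primrec.list_flatMap Primrec.snd
      (Primrec.list_cons.comp (hcons false) (Primrec.list_cons.comp (hcons true)
        (Primrec.const []))).to₂)).to₂
  refine (Primrec.nat_rec₁ [[]] hstep).of_eq fun n => ?_
  induction n with
  | zero => rfl
  | succ n ih => simp [bitStrings, ← ih]

def Incident (v : ℕ) (m : ℕ × ℕ) : Prop := m.1 = v ∨ m.2 = v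

def Adjacent (m m' : ℕ × ℕ) : Prop := Incident m.1 m' ∨ Incident m.2 m'

instance (v : ℕ) : DecidablePred (Incident v) := fun _ => instDecidableOr

instance : DecidableRel Adjacent := fun _ _ => instDecidableOr

lemma adjacent_of_incident {v : ℕ} {m m' : ℕ × ℕ} (h : Incident v m) (h' : Incident v m') :
    Adjacent m m' := by
  rcases h with rfl | rfl
  exacts [Or.inl h', Or.inr h']

lemma Adjacent.symm {m m' : ℕ × ℕ} (h : Adjacent m m') : Adjacent m' m := by
  unfold Adjacent Incident at *
  omega

lemma primrec_adjacent : PrimrecRel Adjacent := by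
  have hincident {f : (ℕ × ℕ) × (ℕ × ℕ) → ℕ} (hf : Primrec f) :
      PrimrecPred fun x => Incident (f x) x.2 :=
    (Primrec.eq.comp (Primrec.fst.comp Primrec.snd) hf).or
      (Primrec.eq.comp (Primrec.snd.comp Primrec.snd) hf)
  exact (hincident (Primrec.fst.comp Primrec.fst)).or (hincident (Primrec.snd.comp Primrec.fst))

section Graph

variable (c : Code)

def Reaches (e a b : ℕ) : Prop :=
  ∃ p : List Bool, p.length ≤ e ∧ b ∈ eval c (Nat.pair (encode p) a)

def ReachesWithin (e s a b : ℕ) : Prop :=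
  ∃ p ∈ bitStrings e, evaln s c (Nat.pair (encode p) a) = some b

def IsEdge (e : ℕ) (m : ℕ × ℕ) : Prop := Reaches c e m.1 m.2 ∧ Reaches c e m.2 m.1

def IsEdgeWithin (e s : ℕ) (m : ℕ × ℕ) : Prop :=
  ReachesWithin c e s m.1 m.2 ∧ ReachesWithin c e s m.2 m.1

def IsNewEdgeAt (e s : ℕ) (m : ℕ × ℕ) : Prop :=
  IsEdgeWithin c e s m ∧ ∀ s' < s, ¬ IsEdgeWithin c e s' m

instance (e s a b : ℕ) : Decidable (ReachesWithin c e s a b) :=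
  inferInstanceAs (Decidable (∃ p ∈ bitStrings e, _))

instance (e s : ℕ) (m : ℕ × ℕ) : Decidable (IsEdgeWithin c e s m) := instDecidableAnd

instance (e s : ℕ) (m : ℕ × ℕ) : Decidable (IsNewEdgeAt c e s m) := instDecidableAnd

/-- Listing an edge only under the first stage that witnesses it makes the enumeration
duplicate-free. -/
def newEdge (e n : ℕ) : Option (ℕ × ℕ) :=
  if IsNewEdgeAt c e n.unpair.1 n.unpair.2.unpair then some n.unpair.2.unpair else none

def edgesUpTo (e t : ℕ) : List (ℕ × ℕ) := (range t).filterMap (newEdge c e)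

variable {c}

lemma ReachesWithin.mono {e s s' a b : ℕ} (h : ReachesWithin c e s a b) (hs : s ≤ s') :
    ReachesWithin c e s' a b := by
  obtain ⟨p, hp, hev⟩ := h
  exact ⟨p, hp, Option.mem_def.1 (evaln_mono hs hev)⟩

lemma reaches_iff_exists_reachesWithin {e a b : ℕ} :
    Reaches c e a b ↔ ∃ s, ReachesWithin c e s a b := by
  simp only [Reaches, ReachesWithin, mem_bitStrings]
  constructor
  · rintro ⟨p, hp, hev⟩
    obtain ⟨s, hs⟩ := evaln_complete.1 hev
    exact ⟨s, p, hp, hs⟩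
  · rintro ⟨s, p, hp, hev⟩
    exact ⟨p, hp, evaln_sound (Option.mem_def.2 hev)⟩

lemma edgesUpTo_prefix {e t t' : ℕ} (h : t ≤ t') : edgesUpTo c e t <+: edgesUpTo c e t' := by
  obtain ⟨k, rfl⟩ := Nat.exists_eq_add_of_le h
  rw [edgesUpTo, edgesUpTo, range_add, filterMap_append]
  exact prefix_append _ _

lemma nodup_edgesUpTo (e t : ℕ) : (edgesUpTo c e t).Nodup := by
  refine nodup_range.filterMap fun n n' m hn hn' => ?_
  simp only [newEdge, Option.mem_def, Option.ite_none_right_eq_some, Option.some.injEq] at hn hn'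
  obtain ⟨⟨hnew, hmin⟩, rfl⟩ := hn
  obtain ⟨⟨hnew', hmin'⟩, hm⟩ := hn'
  have hstage : n.unpair.1 = n'.unpair.1 :=
    le_antisymm (not_lt.1 fun hlt => hmin _ hlt (hm.symm ▸ hnew'))
      (not_lt.1 fun hlt => hmin' _ hlt (hm ▸ hnew))
  have hedge : n.unpair.2 = n'.unpair.2 := by
    rw [← Nat.pair_unpair n.unpair.2, ← Nat.pair_unpair n'.unpair.2, hm]
  rw [← Nat.pair_unpair n, ← Nat.pair_unpair n', hstage, hedge]

lemma isEdge_of_mem_edgesUpTo {e t : ℕ} {m : ℕ × ℕ} (h : m ∈ edgesUpTo c e t) :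
    IsEdge c e m := by
  simp only [edgesUpTo, mem_filterMap, newEdge, Option.ite_none_right_eq_some,
    Option.some.injEq] at h
  obtain ⟨n, -, ⟨⟨h₁, h₂⟩, -⟩, rfl⟩ := h
  exact ⟨reaches_iff_exists_reachesWithin.2 ⟨_, h₁⟩,
    reaches_iff_exists_reachesWithin.2 ⟨_, h₂⟩⟩

lemma exists_mem_edgesUpTo {e : ℕ} {m : ℕ × ℕ} (h : IsEdge c e m) :
    ∃ t, m ∈ edgesUpTo c e t := by
  obtain ⟨s₁, h₁⟩ := reaches_iff_exists_reachesWithin.1 h.1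
  obtain ⟨s₂, h₂⟩ := reaches_iff_exists_reachesWithin.1 h.2
  have hex : ∃ s, IsEdgeWithin c e s m :=
    ⟨max s₁ s₂, h₁.mono (le_max_left _ _), h₂.mono (le_max_right _ _)⟩
  refine ⟨Nat.pair (Nat.find hex) (Nat.pair m.1 m.2) + 1, mem_filterMap.2
    ⟨_, mem_range.2 (Nat.lt_succ_self _), ?_⟩⟩
  simp only [newEdge, Nat.unpair_pair]
  exact if_pos ⟨Nat.find_spec hex, fun s hs => Nat.find_min hex hs⟩

lemma length_le_of_forall_reaches {e a : ℕ} {l : List ℕ} (hl : l.Nodup)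
    (h : ∀ b ∈ l, Reaches c e a b) : l.length ≤ 2 ^ (e + 1) := by
  classical
  -- a neighbour `b` of `a` is determined by a program computing it from `a`
  let code : ℕ → ℕ := fun b =>
    if hb : Reaches c e a b then ofBits (hb.choose ++ [true]) else 0
  have hcode {b} (hb : Reaches c e a b) : code b = ofBits (hb.choose ++ [true]) := dif_pos hb
  have hmaps : ∀ b ∈ l.toFinset, code b ∈ Finset.range (2 ^ (e + 1)) := by
    intro b hb
    have hb := h b (mem_toFinset.1 hb)
    rw [Finset.mem_range, hcode hb]
    refine (ofBits_lt_two_pow _).trans_le (Nat.pow_le_pow_right two_pos ?_)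
    simpa using hb.choose_spec.1
  have hinj : Set.InjOn code l.toFinset := by
    intro b hb b' hb' hbb'
    have hb := h b (mem_toFinset.1 hb)
    have hb' := h b' (mem_toFinset.1 hb')
    rw [hcode hb, hcode hb'] at hbb'
    have hp := hb.choose_spec.2
    rw [ofBits_append_true_injective hbb'] at hp
    exact Part.mem_unique hp hb'.choose_spec.2
  simpa [toFinset_card_of_nodup hl] using Finset.card_le_card_of_injOn code hmaps hinj

lemma countP_fst_eq_le {e : ℕ} {l : List (ℕ × ℕ)} (hl : l.Nodup)
    (he : ∀ m ∈ l, IsEdge c e m) (v : ℕ) : l.countP (fun m => m.1 = v) ≤ 2 ^ (e + 1) := by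
  rw [countP_eq_length_filter, ← length_map (f := Prod.snd)]
  refine length_le_of_forall_reaches (c := c) (a := v)
    ((hl.filter _).map_on fun m hm m' hm' h => ?_) ?_
  · simp only [mem_filter, decide_eq_true_eq] at hm hm'
    exact Prod.ext (hm.2.trans hm'.2.symm) h
  · simp only [mem_map, mem_filter, decide_eq_true_eq]
    rintro _ ⟨m, ⟨hm, rfl⟩, rfl⟩
    exact (he m hm).1

lemma countP_snd_eq_le {e : ℕ} {l : List (ℕ × ℕ)} (hl : l.Nodup)
    (he : ∀ m ∈ l, IsEdge c e m) (v : ℕ) : l.countP (fun m => m.2 = v) ≤ 2 ^ (e + 1) := by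
  have := countP_fst_eq_le (l := l.map Prod.swap) (hl.map Prod.swap_injective)
    (fun _ hm => by
      obtain ⟨m, hm', rfl⟩ := mem_map.1 hm
      exact (he m hm').symm) v
  simpa [countP_map, Function.comp_def] using this

lemma countP_adjacent_le {e : ℕ} {l : List (ℕ × ℕ)} (hl : l.Nodup)
    (he : ∀ m ∈ l, IsEdge c e m) (m : ℕ × ℕ) :
    l.countP (fun m' => Adjacent m m') ≤ 2 ^ (e + 3) := by
  have hsplit : l.countP (fun m' => Adjacent m m') ≤
      l.countP (fun m' => m'.1 = m.1) + l.countP (fun m' => m'.2 = m.1) +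
        (l.countP (fun m' => m'.1 = m.2) + l.countP (fun m' => m'.2 = m.2)) := by
    refine le_trans (le_of_eq ?_) ((countP_or_le_add _ _ l).trans
      (add_le_add (countP_or_le_add _ _ l) (countP_or_le_add _ _ l)))
    congr 1
    funext m'
    rw [Bool.eq_iff_iff, decide_eq_true_iff]
    simp only [Adjacent, Incident, Bool.or_eq_true, decide_eq_true_eq, or_assoc]
  have := countP_fst_eq_le hl he m.1
  have := countP_snd_eq_le hl he m.1
  have := countP_fst_eq_le hl he m.2
  have := countP_snd_eq_le hl he m.2
  rw [pow_succ, pow_succ]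
  omega

variable (c)

lemma primrec_reachesWithin :
    PrimrecPred fun x : ℕ × ℕ × ℕ × ℕ => ReachesWithin c x.1 x.2.1 x.2.2.1 x.2.2.2 := by
  have hR : PrimrecRel fun (p : List Bool) (x : ℕ × ℕ × ℕ × ℕ) =>
      evaln x.2.1 c (Nat.pair (encode p) x.2.2.1) = some x.2.2.2 :=
    Primrec.eq.comp
      (primrec_evaln.comp (((Primrec.fst.comp (Primrec.snd.comp Primrec.snd)).pair
        (Primrec.const c)).pair (Primrec₂.natPair.comp (Primrec.encode.comp Primrec.fst)
          (Primrec.fst.comp (Primrec.snd.comp (Primrec.snd.comp Primrec.snd))))))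
      (Primrec.option_some.comp
        (Primrec.snd.comp (Primrec.snd.comp (Primrec.snd.comp Primrec.snd))))
  exact hR.exists_mem_list.comp (primrec_bitStrings.comp Primrec.fst) Primrec.id

lemma primrec_isEdgeWithin :
    PrimrecPred fun x : ℕ × ℕ × (ℕ × ℕ) => IsEdgeWithin c x.1 x.2.1 x.2.2 := by
  have hs : Primrec fun x : ℕ × ℕ × (ℕ × ℕ) => x.2.1 := Primrec.fst.comp Primrec.snd
  have ha : Primrec fun x : ℕ × ℕ × (ℕ × ℕ) => x.2.2.1 :=
    Primrec.fst.comp (Primrec.snd.comp Primrec.snd)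
  have hb : Primrec fun x : ℕ × ℕ × (ℕ × ℕ) => x.2.2.2 :=
    Primrec.snd.comp (Primrec.snd.comp Primrec.snd)
  exact ((primrec_reachesWithin c).comp (Primrec.fst.pair (hs.pair (ha.pair hb)))).and
    ((primrec_reachesWithin c).comp (Primrec.fst.pair (hs.pair (hb.pair ha))))

lemma primrec_isNewEdgeAt :
    PrimrecPred fun x : ℕ × ℕ × (ℕ × ℕ) => IsNewEdgeAt c x.1 x.2.1 x.2.2 := by
  have hR : PrimrecRel fun (s : ℕ) (x : ℕ × ℕ × (ℕ × ℕ)) =>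
      ¬ IsEdgeWithin c x.1 s x.2.2 :=
    ((primrec_isEdgeWithin c).comp ((Primrec.fst.comp Primrec.snd).pair
      (Primrec.fst.pair (Primrec.snd.comp (Primrec.snd.comp Primrec.snd))))).not
  exact (primrec_isEdgeWithin c).and
    ((hR.forall_mem_list.comp (Primrec.list_range.comp (Primrec.fst.comp Primrec.snd))
      Primrec.id).of_eq fun _ => by simp only [mem_range, id])

lemma primrec_edgesUpTo : Primrec₂ (edgesUpTo c) := by
  have hs : Primrec fun x : ℕ × ℕ => x.2.unpair.1 :=
    Primrec.fst.comp (Primrec.unpair.comp Primrec.snd)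
  have hm : Primrec fun x : ℕ × ℕ => x.2.unpair.2.unpair :=
    Primrec.unpair.comp (Primrec.snd.comp (Primrec.unpair.comp Primrec.snd))
  have hnew : Primrec₂ (newEdge c) :=
    (Primrec.ite ((primrec_isNewEdgeAt c).comp (Primrec.fst.pair (hs.pair hm)))
      (Primrec.option_some.comp hm) (Primrec.const none)).to₂
  exact (Primrec.listFilterMap (Primrec.list_range.comp Primrec.snd)
    (hnew.comp (Primrec.fst.comp Primrec.fst) Primrec.snd).to₂).to₂

end Graph

section Machine

variable (c : Code)

def colouredEdges (e t : ℕ) : List ((ℕ × ℕ) × ℕ) :=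
  greedyColouring Adjacent (edgesUpTo c e t)

def other (v : ℕ) (m : ℕ × ℕ) : ℕ := if m.1 = v then m.2 else m.1

def lookup (e i v t : ℕ) : Option ℕ :=
  ((colouredEdges c e t).find? fun q => decide (Incident v q.1 ∧ q.2 = i)).map
    fun q => other v q.1

def pairMachine : PFun2 := fun r z =>
  (Part.ofOption (decodeProg r)).bind fun ei =>
    (Nat.rfindOpt (lookup c ei.1 ei.2 (encode z))).map fun n => (decode n).getD []

variable {c}

lemma other_fst {a b : ℕ} : other a (a, b) = b := if_pos rfl

lemma other_snd {a b : ℕ} : other b (a, b) = a := by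
  unfold other
  split_ifs with h
  exacts [h.symm, rfl]

lemma colour_lt_of_mem_colouredEdges {e t : ℕ} {q : (ℕ × ℕ) × ℕ}
    (hq : q ∈ colouredEdges c e t) : q.2 < 2 ^ (e + 4) :=
  calc q.2 ≤ (edgesUpTo c e t).countP fun m => Adjacent q.1 m :=
        snd_le_countP_of_mem_greedyColouring Adjacent hq
    _ ≤ 2 ^ (e + 3) :=
        countP_adjacent_le (nodup_edgesUpTo e t) (fun _ hm => isEdge_of_mem_edgesUpTo hm) q.1
    _ < 2 ^ (e + 4) := Nat.pow_lt_pow_right one_lt_two (Nat.lt_succ_self _)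

lemma colouredEdges_prefix {e t t' : ℕ} (ht : t ≤ t') :
    colouredEdges c e t <+: colouredEdges c e t' :=
  greedyColouring_prefix Adjacent (edgesUpTo_prefix ht)

lemma lookup_mono {e i v t t' w : ℕ} (ht : t ≤ t') (h : w ∈ lookup c e i v t) :
    w ∈ lookup c e i v t' := by
  obtain ⟨q, hq, rfl⟩ := Option.map_eq_some_iff.1 h
  rw [lookup, (colouredEdges_prefix ht).find?_eq_some hq]
  rfl

lemma lookup_eq_other {e i v t : ℕ} {m : ℕ × ℕ} (hm : (m, i) ∈ colouredEdges c e t)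
    (hv : Incident v m) : lookup c e i v t = some (other v m) := by
  let p : (ℕ × ℕ) × ℕ → Bool := fun q => decide (Incident v q.1 ∧ q.2 = i)
  obtain ⟨q, hq⟩ := Option.isSome_iff_exists.1
    (find?_isSome (p := p).2 ⟨_, hm, by simpa [p] using hv⟩)
  have hqv : Incident v q.1 ∧ q.2 = i := by simpa [p] using find?_some hq
  -- the colouring is proper, so `(m, i)` is the only edge at `v` of colour `i`
  have hqm : q = (m, i) := eq_of_mem_greedyColouring Adjacent (fun _ _ h => h.symm)
    (mem_of_find?_eq_some hq) hm (adjacent_of_incident hqv.1 hv) hqv.2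
  rw [lookup, hq, hqm]
  rfl

lemma mem_pairMachine_encodeProg {e i t : ℕ} {x y : BStr} (hi : i < 2 ^ (e + 4))
    (h : lookup c e i (encode x) t = some (encode y)) : y ∈ pairMachine c (encodeProg e i) x := by
  simp only [pairMachine, decodeProg_encodeProg hi, Part.coe_some, Part.bind_some,
    Part.mem_map_iff]
  exact ⟨encode y, (Nat.rfindOpt_mono fun ht hw => lookup_mono ht hw).2 ⟨t, h⟩, by simp⟩

lemma exists_encodeProg_of_isEdge {e : ℕ} {x y : BStr} (h : IsEdge c e (encode x, encode y)) :
    ∃ i < 2 ^ (e + 4),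
      y ∈ pairMachine c (encodeProg e i) x ∧ x ∈ pairMachine c (encodeProg e i) y := by
  obtain ⟨t, ht⟩ := exists_mem_edgesUpTo h
  rw [← map_fst_greedyColouring Adjacent (edgesUpTo c e t)] at ht
  obtain ⟨⟨m, i⟩, hm, rfl⟩ := mem_map.1 ht
  have hi := colour_lt_of_mem_colouredEdges hm
  refine ⟨i, hi, mem_pairMachine_encodeProg hi (t := t) ?_,
    mem_pairMachine_encodeProg hi (t := t) ?_⟩
  · rw [lookup_eq_other hm (Or.inl rfl), other_fst]
  · rw [lookup_eq_other hm (Or.inr rfl), other_snd]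

lemma prefixFree_pairMachine : PrefixFree (pairMachine c) := by
  have hdom {r z : BStr} (h : (pairMachine c r z).Dom) : (decodeProg r).isSome :=
    Option.isSome_iff_exists.2 ⟨_, Part.mem_ofOption.1 (Part.dom_iff_mem.1 h.1).choose_spec⟩
  exact fun _ _ _ hp hq hpq => eq_of_prefix_of_decodeProg_isSome (hdom hp) (hdom hq) hpq

variable (c)

lemma primrec_lookup :
    Primrec fun x : ℕ × ℕ × ℕ × ℕ => lookup c x.1 x.2.1 x.2.2.1 x.2.2.2 := by
  have hcol : Primrec fun x : ℕ × ℕ × ℕ × ℕ => colouredEdges c x.1 x.2.2.2 :=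
    (primrec_greedyColouring Adjacent primrec_adjacent).comp ((primrec_edgesUpTo c).comp
      Primrec.fst (Primrec.snd.comp (Primrec.snd.comp Primrec.snd)))
  have hi : Primrec fun x : ℕ × ℕ × ℕ × ℕ => x.2.1 := Primrec.fst.comp Primrec.snd
  have hv : Primrec fun x : ℕ × ℕ × ℕ × ℕ => x.2.2.1 :=
    Primrec.fst.comp (Primrec.snd.comp Primrec.snd)
  have hR : PrimrecRel fun (q : (ℕ × ℕ) × ℕ) (x : ℕ × ℕ × ℕ × ℕ) =>
      Incident x.2.2.1 q.1 ∧ q.2 = x.2.1 :=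
    ((Primrec.eq.comp (Primrec.fst.comp (Primrec.fst.comp Primrec.fst)) (hv.comp Primrec.snd)).or
      (Primrec.eq.comp (Primrec.snd.comp (Primrec.fst.comp Primrec.fst))
        (hv.comp Primrec.snd))).and
      (Primrec.eq.comp (Primrec.snd.comp Primrec.fst) (hi.comp Primrec.snd))
  have hother : Primrec₂ other :=
    (Primrec.ite (Primrec.eq.comp (Primrec.fst.comp Primrec.snd) Primrec.fst)
      (Primrec.snd.comp Primrec.snd) (Primrec.fst.comp Primrec.snd)).to₂
  exact (Primrec.option_map (Primrec.list_head?.comp (hR.listFilter.comp hcol Primrec.id))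
    (hother.comp (hv.comp Primrec.fst) (Primrec.fst.comp Primrec.snd)).to₂).of_eq fun x => by
      simp [lookup]

lemma isMachine_pairMachine : IsMachine (pairMachine c) := by
  have hsearch : Computable₂ fun (a : (BStr × BStr) × (ℕ × ℕ)) (t : ℕ) =>
      lookup c a.2.1 a.2.2 (encode a.1.2) t :=
    ((primrec_lookup c).comp ((Primrec.fst.comp (Primrec.snd.comp Primrec.fst)).pair
      ((Primrec.snd.comp (Primrec.snd.comp Primrec.fst)).pair
        ((Primrec.encode.comp (Primrec.snd.comp (Primrec.fst.comp Primrec.fst))).pair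
          Primrec.snd)))).to_comp.to₂
  have hdecode : Computable₂ fun (_ : (BStr × BStr) × (ℕ × ℕ)) (n : ℕ) =>
      (decode n).getD ([] : BStr) :=
    (Primrec.option_getD.comp (Primrec.decode.comp Primrec.snd) (Primrec.const [])).to_comp.to₂
  exact Partrec.bind (primrec_decodeProg.comp Primrec.fst).to_comp.ofOption
    ((Partrec.rfindOpt hsearch).map hdecode).to₂

end Machine

def IsCodeOf (c : Code) (W : PFun2) : Prop :=
  ∀ p x : BStr, eval c (Nat.pair (encode p) (encode x)) = (W p x).map encode

lemma exists_isCodeOf {W : PFun2} (hW : IsMachine W) : ∃ c : Code, IsCodeOf c W := by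
  obtain ⟨c, hc⟩ := Code.exists_code.1 hW
  refine ⟨c, fun p x => ?_⟩
  simp only [hc, ← encode_prod_val, encodek, Part.coe_some, Part.bind_some]

lemma isEdge_of_Emax_le {W : PFun2} {c : Code} (hc : IsCodeOf c W) {x y : BStr} {e : ℕ}
    (h : Emax W x y ≤ e) : IsEdge c e (encode x, encode y) := by
  have hreaches {x y : BStr} (h : Kcond W y x ≤ e) : Reaches c e (encode x) (encode y) := by
    obtain ⟨p, hp, hpy⟩ := exists_program_of_Kcond_le h
    exact ⟨p, hp, hc p x ▸ Part.mem_map _ hpy⟩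
  exact ⟨hreaches (le_of_max_le_right h), hreaches (le_of_max_le_left h)⟩

lemma IDist_pairMachine_le {W : PFun2} {c : Code} (hc : IsCodeOf c W) {x y : BStr} {e : ℕ}
    (h : Emax W x y ≤ e) :
    IDist (pairMachine c) x y ≤ (e + 2 * Nat.log 2 (e + 2) + 7 : ℕ) := by
  obtain ⟨i, hi, hy, hx⟩ := exists_encodeProg_of_isEdge (isEdge_of_Emax_le hc h)
  exact (IDist_le_length hy hx).trans (by exact_mod_cast length_encodeProg_le hi)

lemma exists_IDist_le_Emax_add_mul_elog {U W : PFun2} (hU : OptimalPrefixDist U)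
    (hW : IsMachine W) : ∃ C : ℕ, ∀ x y : BStr,
      IDist U x y ≤ Emax W x y + C * elog (Emax W x y + 2) + C := by
  obtain ⟨c, hc⟩ := exists_isCodeOf hW
  obtain ⟨C, hC⟩ := hU.2.2 (pairMachine c) (isMachine_pairMachine c) prefixFree_pairMachine
  refine ⟨C + 7, fun x y => ?_⟩
  by_cases htop : Emax W x y = ⊤
  · simp [htop]
  obtain ⟨e, he⟩ := ENat.ne_top_iff_exists.1 htop
  have hmul : 2 * Nat.log 2 (e + 2) ≤ (C + 7) * Nat.log 2 (e + 2) :=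
    Nat.mul_le_mul_right _ (by omega)
  calc IDist U x y ≤ IDist (pairMachine c) x y + C := hC x y
    _ ≤ (e + 2 * Nat.log 2 (e + 2) + 7 : ℕ) + C := by
        gcongr
        exact IDist_pairMachine_le hc he.ge
    _ ≤ (e + (C + 7) * Nat.log 2 (e + 2) + (C + 7) : ℕ) := by
        exact_mod_cast (by omega : e + 2 * Nat.log 2 (e + 2) + 7 + C ≤ _)
    _ = Emax W x y + (C + 7 : ℕ) * elog (Emax W x y + 2) + (C + 7 : ℕ) := by
        rw [← he, show (e : ℕ∞) + 2 = (e + 2 : ℕ) by push_cast; rfl, elog_natCast]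
        push_cast
        rfl

end InformationDistance

open InformationDistance

/-- the prefix-free non-bipartite information distance equals
`E(x,y)` up to an additive `O(log E(x,y))` term. -/
theorem prefix_distance_equals_E_up_to_log
    (U : PFun2) (hU : OptimalPrefixDist U)
    (W : PFun2) (hW : OptimalPrefixK W) :
    ∃ c : ℕ, ∀ x y : BStr,
      Emax W x y - (c : ℕ∞) ≤ IDist U x y ∧
      IDist U x y ≤ Emax W x y + (c : ℕ∞) * elog (Emax W x y + 2) + (c : ℕ∞) := by
  obtain ⟨c₁, hc₁⟩ := hW.2.2 U hU.1 hU.2.1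
  obtain ⟨c₂, hc₂⟩ := exists_IDist_le_Emax_add_mul_elog hU hW.1
  refine ⟨max c₁ c₂, fun x y => ⟨?_, ?_⟩⟩
  · refine tsub_le_iff_right.2 ((Emax_le_IDist_add hc₁ x y).trans ?_)
    gcongr
    exact le_max_left _ _
  · refine (hc₂ x y).trans ?_
    gcongr <;> exact le_max_right _ _
end
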